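/- arXiv:0908.0842 — 4 statements merged into one kernel-verified Lean document; each statement's English description precedes it below -/
import Mathlib

section
/- For a homogeneous polynomial differential form P of degree k with values in s-vectors (s > 0) on R^m, dP = 0 if and only if there exists a homogeneous polynomial form Q of degree k+1 with values in (s-1)-vectors such that d*Q = 0 and dQ = P, where d is the exterior derivative and d* its formal adjoint (codifferential). -/
open MvPolynomial

/-- Mixed polynomial differential forms on ℝ^m: one polynomial coefficient for each
increasing multi-index (i.e. each subset of the coordinates). -/
abbrev MixedForm (m : ℕ) := Finset (Fin m) → MvPolynomial (Fin m) ℝ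

/-- The sign `(-1)^{#{j ∈ B : j < i}}`. -/
noncomputable def fsgn {m : ℕ} (i : Fin m) (B : Finset (Fin m)) : ℝ :=
  (-1 : ℝ) ^ (B.filter (fun j => j < i)).card

/-- The exterior derivative on polynomial forms. -/
noncomputable def extD (m : ℕ) : MixedForm m →ₗ[ℝ] MixedForm m :=
  LinearMap.pi fun B => ∑ i ∈ B, fsgn i B •
    ((pderiv i).toLinearMap ∘ₗ LinearMap.proj (B.erase i))

/-- The codifferential (formal adjoint of the exterior derivative) on polynomial forms. -/
noncomputable def coD (m : ℕ) : MixedForm m →ₗ[ℝ] MixedForm m :=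
  LinearMap.pi fun B => ∑ i ∈ Bᶜ, fsgn i B •
    ((pderiv i).toLinearMap ∘ₗ LinearMap.proj (insert i B))

/-- Forms all of whose coefficients are homogeneous polynomials of degree `k`. -/
noncomputable def Homog (m k : ℕ) : Submodule ℝ (MixedForm m) where
  carrier := {P | ∀ B, (P B).IsHomogeneous k}
  add_mem' := fun ha hb B => (ha B).add (hb B)
  zero_mem' := fun B => isHomogeneous_zero _ _ _
  smul_mem' := by
    intro c P h B
    have h2 : (c • P) B = (C c : MvPolynomial (Fin m) ℝ) * P B := by
      simp [smul_eq_C_mul]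
    rw [h2]
    simpa using (isHomogeneous_C (Fin m) c).mul (h B)

/-- Forms supported in form-degrees belonging to the set `S`. -/
noncomputable def DegSupp (m : ℕ) (S : Set ℕ) : Submodule ℝ (MixedForm m) where
  carrier := {P | ∀ B : Finset (Fin m), B.card ∉ S → P B = 0}
  add_mem' := by intro a b ha hb B hB; simp [ha B hB, hb B hB]
  zero_mem' := by intro B hB; rfl
  smul_mem' := by intro c a ha B hB; simp [ha B hB]

/-- Homogeneity-`k` polynomial solutions of the Hodge–de Rham system in form-degree `s`. -/
noncomputable def Hsp (m k s : ℕ) : Submodule ℝ (MixedForm m) :=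
  Homog m k ⊓ DegSupp m {s} ⊓ LinearMap.ker (extD m) ⊓ LinearMap.ker (coD m)

/-- Homogeneity-`k` polynomial solutions of the generalized Moisil–Théodoresco system
of type `(r,p,q)`. -/
noncomputable def MTsp (m k r p q : ℕ) : Submodule ℝ (MixedForm m) :=
  Homog m k ⊓ DegSupp m {t | ∃ j, p ≤ j ∧ j ≤ q ∧ t = r + 2 * j} ⊓
    LinearMap.ker (extD m + coD m)

/-- The Hodge Laplacian `Δ = d d* + d* d`. -/
noncomputable def hodgeLap (m : ℕ) : MixedForm m →ₗ[ℝ] MixedForm m :=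
  extD m ∘ₗ coD m + coD m ∘ₗ extD m

/-- Harmonic `s`-forms with homogeneous polynomial coefficients of degree `k`. -/
noncomputable def KerDelta (m k s : ℕ) : Submodule ℝ (MixedForm m) :=
  Homog m k ⊓ DegSupp m {s} ⊓ LinearMap.ker (hodgeLap m)

/-- Multiplication of all coefficients by `r^{2j} = (x_1^2 + ⋯ + x_m^2)^j`. -/
noncomputable def mulRpow (m j : ℕ) : MixedForm m →ₗ[ℝ] MixedForm m :=
  LinearMap.pi fun B =>
    (LinearMap.mulLeft ℝ ((∑ i, X i ^ 2 : MvPolynomial (Fin m) ℝ) ^ j)) ∘ₗ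
      LinearMap.proj B

/-- The dimension `d(k,m,s)` of the space of homogeneity-`k` polynomial solutions of the
Hodge–de Rham system in degree `s`, with the conventions `d(k,m,s) = 0` for `k < 0` or
`s ∉ [0,m]`, `d(0,m,0) = d(0,m,m) = 1` and `d(k,m,0) = d(k,m,m) = 0` for `k ≥ 1`. -/
noncomputable def dHR (m : ℕ) (k s : ℤ) : ℚ :=
  if k < 0 ∨ s < 0 ∨ (m : ℤ) < s then 0
  else if s = 0 ∨ s = m then (if k = 0 then 1 else 0)
  else ((m - 2).choose (s.toNat - 1) : ℚ) * ((k.toNat + m - 2).choose (m - 2) : ℚ) *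
    ((2 * (k : ℚ) + m) * ((k : ℚ) + m - 1)) / (((k : ℚ) + s) * ((k : ℚ) + m - s))

/-- The dimension of the space of homogeneous polynomials of degree `k` on ℝ^m
(zero for negative `k`). -/
noncomputable def pdim (m : ℕ) (k : ℤ) : ℚ :=
  if k < 0 then 0 else ((k.toNat + m - 1).choose (m - 1) : ℚ)

/-- The subspace of `s`-forms with homogeneous polynomial coefficients of degree `k`
lying in the kernel of the operator `T`. -/
noncomputable def Kof (m k s : ℕ) (T : MixedForm m →ₗ[ℝ] MixedForm m) :
    Submodule ℝ (MixedForm m) :=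
  Homog m k ⊓ DegSupp m {s} ⊓ LinearMap.ker T

section AuxProof
variable {m : ℕ}


lemma X_mul_pderiv_monomial (i : Fin m) (u : Fin m →₀ ℕ) (a : ℝ) :
    X i * pderiv i (monomial u a) = (u i) • monomial u a := by
  rw [pderiv_monomial]
  rcases Nat.eq_zero_or_pos (u i) with h | h
  · simp [h]
  · rw [X, monomial_mul, one_mul]
    have hle : Finsupp.single i 1 ≤ u := by rwa [Finsupp.single_le_iff]
    rw [add_tsub_cancel_of_le hle, smul_monomial, nsmul_eq_mul, mul_comm]

lemma sum_univ_eq_degree' (u : Fin m →₀ ℕ) : ∑ i, u i = u.degree := by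
  rw [Finsupp.degree]
  exact (Finset.sum_subset (Finset.subset_univ _)
    (fun x _ hx => Finsupp.notMem_support_iff.mp hx)).symm

lemma euler_id {n : ℕ} {f : MvPolynomial (Fin m) ℝ} (hf : f.IsHomogeneous n) :
    ∑ i, X i * pderiv i f = n • f := by
  have hrepr : f = ∑ v ∈ f.support, monomial v (coeff v f) :=
    (support_sum_monomial_coeff f).symm
  rw [hrepr, Finset.smul_sum]
  have : ∀ i : Fin m, X i * pderiv i (∑ v ∈ f.support, monomial v (coeff v f))
      = ∑ v ∈ f.support, (v i) • monomial v (coeff v f) := by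
    intro i
    rw [map_sum, Finset.mul_sum]
    exact Finset.sum_congr rfl fun v _ => X_mul_pderiv_monomial i v _
  simp only [this]
  rw [Finset.sum_comm]
  refine Finset.sum_congr rfl fun v hv => ?_
  rw [← Finset.sum_smul, sum_univ_eq_degree']
  congr 1
  have := hf (mem_support_iff.mp hv)
  rw [Finsupp.degree_eq_weight_one]; exact this

noncomputable def plap (m : ℕ) : Module.End ℝ (MvPolynomial (Fin m) ℝ) :=
  ∑ i, ((pderiv i).toLinearMap ∘ₗ (pderiv i).toLinearMap)

lemma plap_apply (p : MvPolynomial (Fin m) ℝ) :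
    plap m p = ∑ i, pderiv i (pderiv i p) := by simp [plap]

noncomputable def rsq (m : ℕ) : MvPolynomial (Fin m) ℝ := ∑ i, X i ^ 2

lemma rsq_homog : (rsq m).IsHomogeneous 2 :=
  MvPolynomial.IsHomogeneous.sum _ _ _ (fun i _ => by
    simpa using (isHomogeneous_X ℝ i).pow 2)

lemma pderiv_rsq (i : Fin m) : pderiv i (rsq m) = X i + X i := by
  rw [rsq, map_sum]
  rw [Finset.sum_eq_single i]
  · rw [pow_two, pderiv_mul, pderiv_X_self]; ring
  · intro j _ hj
    rw [pow_two, pderiv_mul, pderiv_X_of_ne hj]; ring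
  · intro h; exact absurd (Finset.mem_univ i) h

lemma lapA {d : ℕ} {u : MvPolynomial (Fin m) ℝ} (hu : u.IsHomogeneous d) :
    plap m (rsq m * u) = C (2*(m:ℝ) + 4*(d:ℝ)) * u + rsq m * plap m u := by
  have step : ∀ i : Fin m, pderiv i (pderiv i (rsq m * u)) =
      (u + u) + ((X i * pderiv i u) + (X i * pderiv i u) + (X i * pderiv i u)
        + (X i * pderiv i u)) + rsq m * pderiv i (pderiv i u) := by
    intro i
    rw [pderiv_mul, pderiv_rsq, map_add, pderiv_mul, pderiv_mul, pderiv_rsq,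
      map_add, pderiv_X_self]
    ring
  rw [plap_apply]
  simp only [step]
  rw [Finset.sum_add_distrib, Finset.sum_add_distrib, Finset.sum_const,
    Finset.card_univ, Fintype.card_fin]
  have h4 : ∑ i : Fin m, ((X i * pderiv i u) + (X i * pderiv i u) + (X i * pderiv i u)
      + (X i * pderiv i u)) = C (4 * (d:ℝ)) * u := by
    rw [Finset.sum_add_distrib, Finset.sum_add_distrib, Finset.sum_add_distrib,
      euler_id hu, ← Nat.cast_smul_eq_nsmul ℝ, smul_eq_C_mul]
    rw [show ((4:ℝ) * d) = (d:ℝ) + d + d + d by ring, map_add, map_add, map_add]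
    ring
  rw [h4, ← Finset.mul_sum, ← plap_apply]
  have h2 : (m : ℕ) • (u + u) = C (2*(m:ℝ)) * u := by
    rw [← Nat.cast_smul_eq_nsmul ℝ, smul_eq_C_mul]
    rw [show ((2:ℝ) * m) = (m:ℝ) + m by ring, map_add]
    ring
  rw [h2, map_add]
  ring

lemma rsq_pow_homog (a : ℕ) : ((rsq m) ^ a).IsHomogeneous (2 * a) := by
  simpa [mul_comm] using rsq_homog.pow a

lemma lapPow {d : ℕ} {u : MvPolynomial (Fin m) ℝ} (hu : u.IsHomogeneous d) (a : ℕ) :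
    plap m (rsq m ^ (a+1) * u) =
      C (2*((a:ℝ)+1)*(2*(a:ℝ) + (m:ℝ) + 2*(d:ℝ))) * (rsq m ^ a * u)
        + rsq m ^ (a+1) * plap m u := by
  induction a with
  | zero =>
    rw [pow_one, pow_zero, one_mul, lapA hu]
    congr 2
    push_cast
    ring
  | succ a ih =>
    have hmul : rsq m ^ (a+1+1) * u = rsq m * (rsq m ^ (a+1) * u) := by ring
    have hhom : (rsq m ^ (a+1) * u).IsHomogeneous (2*(a+1) + d) :=
      (rsq_pow_homog (a+1)).mul hu
    rw [hmul, lapA hhom, ih]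
    have hco : C (2*(((a+1:ℕ):ℝ)+1)*(2*((a+1:ℕ):ℝ) + (m:ℝ) + 2*(d:ℝ)))
        = C (2*(m:ℝ) + 4*((2*(a+1)+d : ℕ):ℝ)) + C (2*((a:ℝ)+1)*(2*(a:ℝ) + (m:ℝ) + 2*(d:ℝ)))
          (σ := Fin m) := by
      rw [← map_add]
      congr 1
      push_cast
      ring
    rw [hco]
    ring

lemma pderiv_homog {n : ℕ} (i : Fin m) {f : MvPolynomial (Fin m) ℝ}
    (hf : f.IsHomogeneous (n + 1)) : (pderiv i f).IsHomogeneous n := by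
  rw [← support_sum_monomial_coeff f, map_sum]
  apply MvPolynomial.IsHomogeneous.sum
  intro v hv
  rw [pderiv_monomial]
  rcases Nat.eq_zero_or_pos (v i) with h | h
  · rw [h]
    simpa using isHomogeneous_zero _ _ _
  · apply isHomogeneous_monomial
    have hdeg : v.degree = n + 1 := by
      have := hf (mem_support_iff.mp hv)
      rw [Finsupp.degree_eq_weight_one]; exact this
    have hle : Finsupp.single i 1 ≤ v := Finsupp.single_le_iff.2 h
    have hsum : (v - Finsupp.single i 1).degree + (Finsupp.single i 1 : Fin m →₀ ℕ).degree
        = v.degree := by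
      rw [← sum_univ_eq_degree', ← sum_univ_eq_degree', ← sum_univ_eq_degree',
        ← Finset.sum_add_distrib]
      refine Finset.sum_congr rfl fun j _ => ?_
      simp only [Finsupp.tsub_apply, Finsupp.add_apply]
      rcases eq_or_ne j i with rfl | hji
      · have := Finsupp.single_le_iff.mp hle
        simp only [Finsupp.single_apply, if_pos rfl, if_true]
        omega
      · simp [Finsupp.single_apply, Ne.symm hji]
    have hone : (Finsupp.single i 1 : Fin m →₀ ℕ).degree = 1 := by
      rw [← sum_univ_eq_degree']
      simp [Finsupp.single_apply]
    omega

lemma pderiv_homog0 {f : MvPolynomial (Fin m) ℝ} (hf : f.IsHomogeneous 0) (i : Fin m) :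
    pderiv i f = 0 := by
  rw [← support_sum_monomial_coeff f, map_sum]
  apply Finset.sum_eq_zero
  intro v hv
  have hdeg : v.degree = 0 := by
    have := hf (mem_support_iff.mp hv)
    rw [Finsupp.degree_eq_weight_one]; exact this
  have hv0 : v = 0 := (Finsupp.degree_eq_zero_iff v).mp hdeg
  rw [pderiv_monomial, hv0]
  simp

lemma plap_homog {n : ℕ} {f : MvPolynomial (Fin m) ℝ} (hf : f.IsHomogeneous (n + 2)) :
    (plap m f).IsHomogeneous n := by
  rw [plap_apply]
  exact MvPolynomial.IsHomogeneous.sum _ _ _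
    (fun i _ => pderiv_homog i (pderiv_homog i hf))

lemma plap_zero_of_low {n : ℕ} {f : MvPolynomial (Fin m) ℝ} (hf : f.IsHomogeneous n)
    (hn : n ≤ 1) : plap m f = 0 := by
  rw [plap_apply]
  apply Finset.sum_eq_zero
  intro i _
  interval_cases n
  · rw [pderiv_homog0 hf i, map_zero]
  · exact pderiv_homog0 (pderiv_homog i hf) i

lemma plap_iter_homog {f : MvPolynomial (Fin m) ℝ} {k : ℕ} (hf : f.IsHomogeneous k) :
    ∀ j, ((plap m ^ j) f).IsHomogeneous (k - 2 * j) := by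
  intro j
  induction j generalizing k f with
  | zero => simpa using hf
  | succ j ih =>
    rw [pow_succ, Module.End.mul_apply]
    have h2 : k - 2 * (j+1) = (k - 2) - 2 * j := by omega
    rw [h2]
    apply ih
    rcases le_or_gt k 1 with h | h
    · rw [plap_zero_of_low hf h]; exact isHomogeneous_zero _ _ _
    · obtain ⟨n, rfl⟩ : ∃ n, k = n + 2 := ⟨k - 2, by omega⟩
      simpa using plap_homog hf

lemma plap_iter_zero {f : MvPolynomial (Fin m) ℝ} {k : ℕ} (hf : f.IsHomogeneous k)
    {j : ℕ} (hj : k < 2 * j) : (plap m ^ j) f = 0 := by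
  induction j generalizing k f with
  | zero => omega
  | succ j ih =>
    rw [pow_succ, Module.End.mul_apply]
    rcases le_or_gt k 1 with h | h
    · rw [plap_zero_of_low hf h, map_zero]
    · obtain ⟨n, rfl⟩ : ∃ n, k = n + 2 := ⟨k - 2, by omega⟩
      exact ih (plap_homog hf) (by omega)

noncomputable def cSeq (m k j : ℕ) : ℝ := 2*((j:ℝ)+1)*((m:ℝ) + 2*(k:ℝ) - 2*(j:ℝ))

noncomputable def aSeq (m k j : ℕ) : ℝ := (-1)^j / ∏ t ∈ Finset.range (j+1), cSeq m k t

lemma cSeq_ne (hm : 0 < m) {k j : ℕ} (hj : j ≤ k) : cSeq m k j ≠ 0 := by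
  unfold cSeq
  have h1 : (0:ℝ) < 2*((j:ℝ)+1) := by positivity
  have h2 : (0:ℝ) < (m:ℝ) + 2*(k:ℝ) - 2*(j:ℝ) := by
    have ha : (j:ℝ) ≤ (k:ℝ) := by exact_mod_cast hj
    have hb : (1:ℝ) ≤ (m:ℝ) := by exact_mod_cast hm
    nlinarith
  positivity

lemma prodC_ne (hm : 0 < m) {k j : ℕ} (hj : j ≤ k) :
    ∏ t ∈ Finset.range (j+1), cSeq m k t ≠ 0 := by
  rw [Finset.prod_ne_zero_iff]
  intro t ht
  exact cSeq_ne hm (by have := Finset.mem_range.mp ht; omega)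

lemma aSeq_zero_mul (hm : 0 < m) (k : ℕ) : aSeq m k 0 * cSeq m k 0 = 1 := by
  unfold aSeq
  rw [Finset.prod_range_one, pow_zero]
  field_simp [cSeq_ne hm (Nat.zero_le k)]

lemma aSeq_rec (hm : 0 < m) {k j : ℕ} (hj : j + 1 ≤ k) :
    aSeq m k (j+1) * cSeq m k (j+1) = - aSeq m k j := by
  unfold aSeq
  rw [Finset.prod_range_succ, pow_succ]
  have h1 : cSeq m k (j+1) ≠ 0 := cSeq_ne hm hj
  have h2 : ∏ t ∈ Finset.range (j+1), cSeq m k t ≠ 0 := prodC_ne hm (by omega)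
  field_simp

lemma plap_C_mul (r : ℝ) (p : MvPolynomial (Fin m) ℝ) :
    plap m (C r * p) = C r * plap m p := by
  rw [← smul_eq_C_mul, ← smul_eq_C_mul, map_smul]

lemma lapSurj (hm : 0 < m) {k : ℕ} {f : MvPolynomial (Fin m) ℝ}
    (hf : f.IsHomogeneous k) :
    ∃ g : MvPolynomial (Fin m) ℝ, g.IsHomogeneous (k + 2) ∧ plap m g = f := by
  classical
  refine ⟨∑ j ∈ Finset.range (k+1), C (aSeq m k j) * (rsq m ^ (j+1) * (plap m ^ j) f),
    ?_, ?_⟩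
  · apply MvPolynomial.IsHomogeneous.sum
    intro j _
    apply MvPolynomial.IsHomogeneous.C_mul
    rcases le_or_gt (2*j) k with h | h
    · have h1 : ((rsq m ^ (j+1)) * (plap m ^ j) f).IsHomogeneous (2*(j+1) + (k - 2*j)) :=
        (rsq_pow_homog (j+1)).mul (plap_iter_homog hf j)
      rwa [show 2*(j+1) + (k - 2*j) = k + 2 by omega] at h1
    · rw [plap_iter_zero hf h, mul_zero]
      exact isHomogeneous_zero _ _ _
  · rw [map_sum]
    have hterm : ∀ j, plap m (C (aSeq m k j) * (rsq m ^ (j+1) * (plap m ^ j) f))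
        = C (aSeq m k j * (2*((j:ℝ)+1)*(2*(j:ℝ) + (m:ℝ) + 2*(((k - 2*j : ℕ)):ℝ))))
            * (rsq m ^ j * (plap m ^ j) f)
          + C (aSeq m k j) * (rsq m ^ (j+1) * (plap m ^ (j+1)) f) := by
      intro j
      rw [plap_C_mul, lapPow (plap_iter_homog hf j) j, mul_add, ← mul_assoc, ← map_mul]
      have hp : (plap m ^ (j+1)) f = plap m ((plap m ^ j) f) := by
        rw [pow_succ', Module.End.mul_apply]
      rw [hp]
    simp only [hterm]
    rw [Finset.sum_add_distrib]
    rw [Finset.sum_range_succ' (fun j => C (aSeq m k j * (2*((j:ℝ)+1)*(2*(j:ℝ) + (m:ℝ)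
      + 2*(((k - 2*j : ℕ)):ℝ)))) * (rsq m ^ j * (plap m ^ j) f)) k]
    rw [Finset.sum_range_succ (fun j => C (aSeq m k j) * (rsq m ^ (j+1) * (plap m ^ (j+1)) f)) k]
    have hz : C (aSeq m k k) * (rsq m ^ (k+1) * (plap m ^ (k+1)) f) = 0 := by
      rw [plap_iter_zero hf (by omega), mul_zero, mul_zero]
    have h0 : C (aSeq m k 0 * (2*(((0:ℕ):ℝ)+1)*(2*((0:ℕ):ℝ) + (m:ℝ) + 2*(((k - 2*0 : ℕ)):ℝ))))
        * (rsq m ^ 0 * (plap m ^ 0) f) = f := by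
      have hcs : (2*(((0:ℕ):ℝ)+1)*(2*((0:ℕ):ℝ) + (m:ℝ) + 2*(((k - 2*0 : ℕ)):ℝ)))
          = cSeq m k 0 := by
        unfold cSeq
        push_cast [Nat.sub_zero]
        ring
      rw [hcs, aSeq_zero_mul hm k, map_one, one_mul, pow_zero, one_mul, pow_zero,
        Module.End.one_apply]
    have hAB : (∑ j ∈ Finset.range k,
          C (aSeq m k (j + 1) * (2 * ((((j + 1):ℕ):ℝ) + 1) * (2 * (((j + 1):ℕ):ℝ) + (m:ℝ)
            + 2 * (((k - 2 * (j + 1)):ℕ):ℝ)))) * (rsq m ^ (j + 1) * (plap m ^ (j + 1)) f))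
        + (∑ j ∈ Finset.range k, C (aSeq m k j) * (rsq m ^ (j + 1) * (plap m ^ (j + 1)) f))
        = 0 := by
      rw [← Finset.sum_add_distrib]
      apply Finset.sum_eq_zero
      intro j _
      rw [← add_mul, ← map_add]
      rcases le_or_gt (2*(j+1)) k with h | h
      · have hcs : (aSeq m k (j+1) * (2 * ((((j + 1):ℕ):ℝ) + 1) * (2 * (((j + 1):ℕ):ℝ) + (m:ℝ)
            + 2 * (((k - 2 * (j + 1)):ℕ):ℝ))) + aSeq m k j) = 0 := by
          have hc2 : (2 * ((((j + 1):ℕ):ℝ) + 1) * (2 * (((j + 1):ℕ):ℝ) + (m:ℝ)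
              + 2 * (((k - 2 * (j + 1)):ℕ):ℝ))) = cSeq m k (j+1) := by
            unfold cSeq
            rw [Nat.cast_sub (by omega)]
            push_cast
            ring
          rw [hc2, aSeq_rec hm (by omega), neg_add_cancel]
        rw [hcs, map_zero, zero_mul]
      · rw [plap_iter_zero hf h, mul_zero, mul_zero]
    linear_combination h0 + hAB + hz

section fsgnLemmas
variable {m : ℕ} (i j : Fin m) (B : Finset (Fin m))
lemma fsgn_mul_self : fsgn i B * fsgn i B = 1 := by
  simp [fsgn, ← pow_add, ← two_mul, pow_mul]
lemma fsgn_erase_of_le (h : i ≤ j) : fsgn i (B.erase j) = fsgn i B := by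
  unfold fsgn
  rw [Finset.filter_erase, Finset.erase_eq_of_notMem]
  simp only [Finset.mem_filter]
  rintro ⟨-, hj⟩
  exact absurd h (not_le.2 hj)
lemma fsgn_insert_of_le (h : i ≤ j) : fsgn i (insert j B) = fsgn i B := by
  unfold fsgn
  rw [Finset.filter_insert, if_neg (by exact fun hj => absurd h (not_le.2 hj))]
lemma fsgn_insert_of_lt (h : j < i) (hj : j ∉ B) : fsgn i (insert j B) = -fsgn i B := by
  unfold fsgn
  rw [Finset.filter_insert, if_pos h, Finset.card_insert_of_notMem (by simp [hj]),
    pow_succ, mul_comm]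
  ring
lemma fsgn_erase_of_lt (h : j < i) (hj : j ∈ B) : fsgn i (B.erase j) = -fsgn i B := by
  have : B = insert j (B.erase j) := (Finset.insert_erase hj).symm
  conv_rhs => rw [this]
  rw [fsgn_insert_of_lt i j _ h (Finset.notMem_erase j B)]
  ring
variable {i j B}
lemma sgnEE (hij : i ≠ j) (hi : i ∈ B) (hj : j ∈ B) :
    fsgn i B * fsgn j (B.erase i) = -(fsgn j B * fsgn i (B.erase j)) := by
  rcases lt_or_gt_of_ne hij with h | h
  · rw [fsgn_erase_of_lt j i B h hi, fsgn_erase_of_le i j B h.le]; ring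
  · rw [fsgn_erase_of_le j i B h.le, fsgn_erase_of_lt i j B h hj]; ring
lemma sgnCC (hij : i ≠ j) (hi : i ∉ B) (hj : j ∉ B) :
    fsgn i B * fsgn j (insert i B) = -(fsgn j B * fsgn i (insert j B)) := by
  rcases lt_or_gt_of_ne hij with h | h
  · rw [fsgn_insert_of_lt j i B h hi, fsgn_insert_of_le i j B h.le]; ring
  · rw [fsgn_insert_of_le j i B h.le, fsgn_insert_of_lt i j B h hj]; ring
lemma sgnEC (hi : i ∈ B) (hj : j ∉ B) :
    fsgn i B * fsgn j (B.erase i) = -(fsgn j B * fsgn i (insert j B)) := by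
  have hij : i ≠ j := fun h => hj (h ▸ hi)
  rcases lt_or_gt_of_ne hij with h | h
  · rw [fsgn_erase_of_lt j i B h hi, fsgn_insert_of_le i j B h.le]; ring
  · rw [fsgn_erase_of_le j i B h.le, fsgn_insert_of_lt i j B h hj]; ring
end fsgnLemmas




lemma extD_apply (P : MixedForm m) (B : Finset (Fin m)) :
    extD m P B = ∑ i ∈ B, fsgn i B • pderiv i (P (B.erase i)) := by
  simp [extD, LinearMap.pi_apply]

lemma coD_apply (P : MixedForm m) (B : Finset (Fin m)) :
    coD m P B = ∑ i ∈ Bᶜ, fsgn i B • pderiv i (P (insert i B)) := by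
  simp [coD, LinearMap.pi_apply]

lemma pd_comm (i j : Fin m) (p : MvPolynomial (Fin m) ℝ) :
    pderiv i (pderiv j p) = pderiv j (pderiv i p) := by
  by_cases hij : i = j
  · subst hij; rfl
  · induction p using MvPolynomial.induction_on' with
    | monomial u a =>
      simp only [pderiv_monomial]
      have h1 : (u - Finsupp.single j 1 : Fin m →₀ ℕ) i = u i := by
        simp [Finsupp.tsub_apply, Finsupp.single_apply, Ne.symm hij]
      have h2 : (u - Finsupp.single i 1 : Fin m →₀ ℕ) j = u j := by
        simp [Finsupp.tsub_apply, Finsupp.single_apply, hij]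
      rw [h1, h2]
      have h3 : u - Finsupp.single j 1 - Finsupp.single i 1
          = u - Finsupp.single i 1 - Finsupp.single j 1 := by
        ext a; simp [Finsupp.tsub_apply]; omega
      rw [h3]
      ring_nf
    | add p q hp hq => simp [map_add, hp, hq]

lemma smul_eq_self_zero {M : Type*} [AddCommGroup M] [Module ℝ M] {a : M}
    (h : a = -a) : a = 0 := by
  have h2 : (2:ℝ) • a = 0 := by
    rw [two_smul]
    nth_rewrite 2 [h]
    exact add_neg_cancel a
  have := congrArg (fun x => ((2:ℝ)⁻¹) • x) h2
  simpa [smul_smul] using this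

/-- d ∘ d = 0 -/
lemma extD_extD (P : MixedForm m) : extD m (extD m P) = 0 := by
  funext B
  rw [extD_apply]
  simp only [extD_apply]
  have hrw : ∀ i ∈ B, fsgn i B • pderiv i
        (∑ j ∈ B.erase i, fsgn j (B.erase i) • pderiv j (P ((B.erase i).erase j)))
      = ∑ j ∈ B.erase i, (fsgn i B * fsgn j (B.erase i)) •
          pderiv i (pderiv j (P ((B.erase i).erase j))) := by
    intro i _
    rw [map_sum, Finset.smul_sum]
    refine Finset.sum_congr rfl fun j _ => ?_
    rw [Derivation.map_smul, smul_smul]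
  rw [Finset.sum_congr rfl hrw]
  set t : Fin m → Fin m → MvPolynomial (Fin m) ℝ := fun i j =>
    (fsgn i B * fsgn j (B.erase i)) • pderiv i (pderiv j (P ((B.erase i).erase j))) with ht
  show ∑ i ∈ B, ∑ j ∈ B.erase i, t i j = 0
  have hcomm : ∑ i ∈ B, ∑ j ∈ B.erase i, t i j = ∑ j ∈ B, ∑ i ∈ B.erase j, t i j :=
    Finset.sum_comm' (by
      intro x y
      simp only [Finset.mem_erase]
      tauto)
  have hanti : ∀ j ∈ B, ∀ i ∈ B.erase j, t i j = - t j i := by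
    intro j hj i hi
    obtain ⟨hij, hiB⟩ := Finset.mem_erase.mp hi
    rw [ht]
    simp only
    rw [sgnEE hij hiB hj, pd_comm, Finset.erase_right_comm, neg_smul]
  apply smul_eq_self_zero
  nth_rewrite 1 [hcomm]
  rw [← Finset.sum_neg_distrib]
  refine Finset.sum_congr rfl fun j hj => ?_
  rw [← Finset.sum_neg_distrib]
  exact Finset.sum_congr rfl fun i hi => hanti j hj i hi

/-- d* ∘ d* = 0 -/
lemma coD_coD (P : MixedForm m) : coD m (coD m P) = 0 := by
  funext B
  rw [coD_apply]
  simp only [coD_apply]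
  have hrw : ∀ i ∈ Bᶜ, fsgn i B • pderiv i
        (∑ j ∈ (insert i B)ᶜ, fsgn j (insert i B) • pderiv j (P (insert j (insert i B))))
      = ∑ j ∈ (insert i B)ᶜ, (fsgn i B * fsgn j (insert i B)) •
          pderiv i (pderiv j (P (insert j (insert i B)))) := by
    intro i _
    rw [map_sum, Finset.smul_sum]
    refine Finset.sum_congr rfl fun j _ => ?_
    rw [Derivation.map_smul, smul_smul]
  rw [Finset.sum_congr rfl hrw]
  set t : Fin m → Fin m → MvPolynomial (Fin m) ℝ := fun i j =>
    (fsgn i B * fsgn j (insert i B)) • pderiv i (pderiv j (P (insert j (insert i B)))) with ht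
  show ∑ i ∈ Bᶜ, ∑ j ∈ (insert i B)ᶜ, t i j = 0
  have hcomm : ∑ i ∈ Bᶜ, ∑ j ∈ (insert i B)ᶜ, t i j
      = ∑ j ∈ Bᶜ, ∑ i ∈ (insert j B)ᶜ, t i j :=
    Finset.sum_comm' (by
      intro x y
      simp only [Finset.mem_compl, Finset.mem_insert, not_or]
      constructor
      · rintro ⟨hx, hy1, hy2⟩
        exact ⟨⟨fun h => hy1 h.symm, hx⟩, hy2⟩
      · rintro ⟨⟨hx1, hx2⟩, hy⟩
        exact ⟨hx2, fun h => hx1 h.symm, hy⟩)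
  have hanti : ∀ j ∈ Bᶜ, ∀ i ∈ (insert j B)ᶜ, t i j = - t j i := by
    intro j hj i hi
    rw [Finset.mem_compl] at hj
    rw [Finset.mem_compl, Finset.mem_insert] at hi
    push_neg at hi
    rw [ht]
    simp only
    rw [sgnCC hi.1 hi.2 hj, pd_comm, Finset.insert_comm, neg_smul]
  apply smul_eq_self_zero
  nth_rewrite 1 [hcomm]
  rw [← Finset.sum_neg_distrib]
  refine Finset.sum_congr rfl fun j hj => ?_
  rw [← Finset.sum_neg_distrib]
  exact Finset.sum_congr rfl fun i hi => hanti j hj i hi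

/-- Hodge Laplacian is the componentwise Laplacian. -/
lemma lap_eq (P : MixedForm m) (B : Finset (Fin m)) :
    extD m (coD m P) B + coD m (extD m P) B = ∑ i, pderiv i (pderiv i (P B)) := by
  have hE : extD m (coD m P) B = ∑ i ∈ B, pderiv i (pderiv i (P B))
      + ∑ i ∈ B, ∑ j ∈ Bᶜ,
        (fsgn i B * fsgn j (B.erase i)) • pderiv i (pderiv j (P (insert j (B.erase i)))) := by
    rw [extD_apply, ← Finset.sum_add_distrib]
    refine Finset.sum_congr rfl fun i hi => ?_
    rw [coD_apply, map_sum, Finset.smul_sum]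
    have hcompl : (B.erase i)ᶜ = insert i Bᶜ := Finset.compl_erase
    rw [Finset.sum_congr hcompl (fun j _ => rfl), Finset.sum_insert (by
      rw [Finset.mem_compl]; exact fun h => h hi)]
    rw [fsgn_erase_of_le i i B le_rfl, Finset.insert_erase hi,
      Derivation.map_smul, smul_smul, fsgn_mul_self, one_smul]
    congr 1
    refine Finset.sum_congr rfl fun j _ => ?_
    rw [Derivation.map_smul, smul_smul]
  have hC : coD m (extD m P) B = ∑ j ∈ Bᶜ, pderiv j (pderiv j (P B))
      + ∑ j ∈ Bᶜ, ∑ i ∈ B,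
        (fsgn j B * fsgn i (insert j B)) • pderiv j (pderiv i (P ((insert j B).erase i))) := by
    rw [coD_apply, ← Finset.sum_add_distrib]
    refine Finset.sum_congr rfl fun j hj => ?_
    rw [Finset.mem_compl] at hj
    rw [extD_apply, map_sum, Finset.smul_sum]
    rw [Finset.sum_insert hj]
    rw [fsgn_insert_of_le j j B le_rfl, Finset.erase_insert hj,
      Derivation.map_smul, smul_smul, fsgn_mul_self, one_smul]
    congr 1
    refine Finset.sum_congr rfl fun i _ => ?_
    rw [Derivation.map_smul, smul_smul]
  rw [hE, hC]
  have hcross : ∑ i ∈ B, ∑ j ∈ Bᶜ,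
        (fsgn i B * fsgn j (B.erase i)) • pderiv i (pderiv j (P (insert j (B.erase i))))
      + ∑ j ∈ Bᶜ, ∑ i ∈ B,
        (fsgn j B * fsgn i (insert j B)) • pderiv j (pderiv i (P ((insert j B).erase i)))
      = 0 := by
    rw [Finset.sum_comm (s := Bᶜ), ← Finset.sum_add_distrib]
    apply Finset.sum_eq_zero
    intro i hi
    rw [← Finset.sum_add_distrib]
    apply Finset.sum_eq_zero
    intro j hj
    rw [Finset.mem_compl] at hj
    have hij : i ≠ j := fun h => hj (h ▸ hi)
    rw [sgnEC hi hj, Finset.erase_insert_of_ne (Ne.symm hij), pd_comm, neg_smul,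
      neg_add_cancel]
  calc (∑ i ∈ B, pderiv i (pderiv i (P B)) + _) + (∑ j ∈ Bᶜ, pderiv j (pderiv j (P B)) + _)
      = (∑ i ∈ B, pderiv i (pderiv i (P B)) + ∑ j ∈ Bᶜ, pderiv j (pderiv j (P B)))
        + (∑ i ∈ B, ∑ j ∈ Bᶜ,
          (fsgn i B * fsgn j (B.erase i)) • pderiv i (pderiv j (P (insert j (B.erase i))))
        + ∑ j ∈ Bᶜ, ∑ i ∈ B,
          (fsgn j B * fsgn i (insert j B)) • pderiv j (pderiv i (P ((insert j B).erase i)))) := by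
        ring
    _ = ∑ i, pderiv i (pderiv i (P B)) := by
        rw [hcross, add_zero, Finset.sum_add_sum_compl]

/-- The Koszul/contraction operator with the Euler vector field. -/
noncomputable def kz (P : MixedForm m) : MixedForm m :=
  fun B => ∑ i ∈ Bᶜ, fsgn i B • (X i * P (insert i B))

lemma homotopy_id (P : MixedForm m) (B : Finset (Fin m)) :
    extD m (kz P) B + kz (extD m P) B
      = B.card • P B + ∑ i, X i * pderiv i (P B) := by
  have hE : extD m (kz P) B = ∑ i ∈ B, (P B + X i * pderiv i (P B))
      + ∑ i ∈ B, ∑ j ∈ Bᶜ,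
        (fsgn i B * fsgn j (B.erase i)) • (X j * pderiv i (P (insert j (B.erase i)))) := by
    rw [extD_apply, ← Finset.sum_add_distrib]
    refine Finset.sum_congr rfl fun i hi => ?_
    show fsgn i B • pderiv i (kz P (B.erase i)) = _
    unfold kz
    rw [map_sum, Finset.smul_sum]
    have hcompl : (B.erase i)ᶜ = insert i Bᶜ := Finset.compl_erase
    rw [Finset.sum_congr hcompl (fun j _ => rfl), Finset.sum_insert (by
      rw [Finset.mem_compl]; exact fun h => h hi)]
    rw [fsgn_erase_of_le i i B le_rfl, Finset.insert_erase hi,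
      Derivation.map_smul, smul_smul, fsgn_mul_self, one_smul,
      pderiv_mul, pderiv_X_self, one_mul]
    congr 1
    refine Finset.sum_congr rfl fun j hj => ?_
    rw [Finset.mem_compl] at hj
    have hji : j ≠ i := fun h => hj (h ▸ hi)
    rw [Derivation.map_smul, smul_smul, pderiv_mul, pderiv_X_of_ne hji, zero_mul, zero_add]
  have hC : kz (extD m P) B = ∑ j ∈ Bᶜ, X j * pderiv j (P B)
      + ∑ j ∈ Bᶜ, ∑ i ∈ B,
        (fsgn j B * fsgn i (insert j B)) • (X j * pderiv i (P ((insert j B).erase i))) := by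
    unfold kz
    rw [← Finset.sum_add_distrib]
    refine Finset.sum_congr rfl fun j hj => ?_
    rw [Finset.mem_compl] at hj
    rw [extD_apply, Finset.sum_insert hj, mul_add, smul_add, Finset.mul_sum, Finset.smul_sum]
    rw [fsgn_insert_of_le j j B le_rfl, Finset.erase_insert hj]
    rw [mul_smul_comm, smul_smul, fsgn_mul_self, one_smul]
    congr 1
    refine Finset.sum_congr rfl fun i _ => ?_
    rw [mul_smul_comm, smul_smul]
  rw [hE, hC]
  have hcross : ∑ i ∈ B, ∑ j ∈ Bᶜ,
        (fsgn i B * fsgn j (B.erase i)) • (X j * pderiv i (P (insert j (B.erase i))))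
      + ∑ j ∈ Bᶜ, ∑ i ∈ B,
        (fsgn j B * fsgn i (insert j B)) • (X j * pderiv i (P ((insert j B).erase i)))
      = 0 := by
    rw [Finset.sum_comm (s := Bᶜ), ← Finset.sum_add_distrib]
    apply Finset.sum_eq_zero
    intro i hi
    rw [← Finset.sum_add_distrib]
    apply Finset.sum_eq_zero
    intro j hj
    rw [Finset.mem_compl] at hj
    have hij : i ≠ j := fun h => hj (h ▸ hi)
    rw [sgnEC hi hj, Finset.erase_insert_of_ne (Ne.symm hij), neg_smul, neg_add_cancel]
  have hsplit : ∑ i ∈ B, (P B + X i * pderiv i (P B))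
      = B.card • P B + ∑ i ∈ B, X i * pderiv i (P B) := by
    rw [Finset.sum_add_distrib, Finset.sum_const]
  calc (∑ i ∈ B, (P B + X i * pderiv i (P B)) + _) + (∑ j ∈ Bᶜ, X j * pderiv j (P B) + _)
      = (∑ i ∈ B, (P B + X i * pderiv i (P B)) + ∑ j ∈ Bᶜ, X j * pderiv j (P B))
        + (∑ i ∈ B, ∑ j ∈ Bᶜ,
            (fsgn i B * fsgn j (B.erase i)) • (X j * pderiv i (P (insert j (B.erase i))))
          + ∑ j ∈ Bᶜ, ∑ i ∈ B,
            (fsgn j B * fsgn i (insert j B)) • (X j * pderiv i (P ((insert j B).erase i)))) := by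
        ring
    _ = B.card • P B + ∑ i, X i * pderiv i (P B) := by
        rw [hcross, add_zero, hsplit, add_assoc, Finset.sum_add_sum_compl]


lemma mem_Homog {P : MixedForm m} {k : ℕ} :
    P ∈ Homog m k ↔ ∀ B, (P B).IsHomogeneous k := Iff.rfl

lemma mem_DegSupp {P : MixedForm m} {S : Set ℕ} :
    P ∈ DegSupp m S ↔ ∀ B : Finset (Fin m), B.card ∉ S → P B = 0 := Iff.rfl

lemma smul_homog {c : ℝ} {q : MvPolynomial (Fin m) ℝ} {n : ℕ} (hq : q.IsHomogeneous n) :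
    (c • q).IsHomogeneous n := by
  rw [smul_eq_C_mul]
  exact hq.C_mul c

lemma extD_homog {k : ℕ} {P : MixedForm m} (h : ∀ B, (P B).IsHomogeneous (k+1))
    (B : Finset (Fin m)) : ((extD m P) B).IsHomogeneous k := by
  rw [extD_apply]
  exact MvPolynomial.IsHomogeneous.sum _ _ _
    (fun i _ => smul_homog (pderiv_homog i (h _)))

lemma coD_homog {k : ℕ} {P : MixedForm m} (h : ∀ B, (P B).IsHomogeneous (k+1))
    (B : Finset (Fin m)) : ((coD m P) B).IsHomogeneous k := by
  rw [coD_apply]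
  exact MvPolynomial.IsHomogeneous.sum _ _ _
    (fun i _ => smul_homog (pderiv_homog i (h _)))

lemma kz_homog {k : ℕ} {P : MixedForm m} (h : ∀ B, (P B).IsHomogeneous k)
    (B : Finset (Fin m)) : ((kz P) B).IsHomogeneous (k+1) := by
  unfold kz
  refine MvPolynomial.IsHomogeneous.sum _ _ _ (fun i _ => smul_homog ?_)
  have h2 := (isHomogeneous_X ℝ i).mul (h (insert i B))
  rwa [add_comm 1 k] at h2

lemma extD_supp {t : ℕ} {P : MixedForm m} (h : ∀ B : Finset (Fin m), B.card ≠ t → P B = 0) :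
    ∀ B : Finset (Fin m), B.card ≠ t + 1 → extD m P B = 0 := by
  intro B hB
  rw [extD_apply]
  apply Finset.sum_eq_zero
  intro i hi
  have hc : (B.erase i).card ≠ t := by
    rw [Finset.card_erase_of_mem hi]
    have := Finset.card_pos.mpr ⟨i, hi⟩
    omega
  rw [h _ hc, map_zero, smul_zero]

lemma coD_supp {t : ℕ} {P : MixedForm m} (h : ∀ B : Finset (Fin m), B.card ≠ t + 1 → P B = 0) :
    ∀ B : Finset (Fin m), B.card ≠ t → coD m P B = 0 := by
  intro B hB
  rw [coD_apply]
  apply Finset.sum_eq_zero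
  intro i hi
  rw [Finset.mem_compl] at hi
  have hc : (insert i B).card ≠ t + 1 := by
    rw [Finset.card_insert_of_notMem hi]
    omega
  rw [h _ hc, map_zero, smul_zero]

lemma kz_supp {t : ℕ} {P : MixedForm m} (h : ∀ B : Finset (Fin m), B.card ≠ t + 1 → P B = 0) :
    ∀ B : Finset (Fin m), B.card ≠ t → kz P B = 0 := by
  intro B hB
  unfold kz
  apply Finset.sum_eq_zero
  intro i hi
  rw [Finset.mem_compl] at hi
  have hc : (insert i B).card ≠ t + 1 := by
    rw [Finset.card_insert_of_notMem hi]
    omega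
  rw [h _ hc, mul_zero, smul_zero]

lemma kz_zero : kz (0 : MixedForm m) = 0 := by
  funext B
  unfold kz
  apply Finset.sum_eq_zero
  intro i _
  show fsgn i B • (X i * (0 : MvPolynomial (Fin m) ℝ)) = 0
  rw [mul_zero, smul_zero]

end AuxProof

theorem refined_poincare_d (m k s : ℕ) (hs : 0 < s) (P : MixedForm m)
    (hP : P ∈ Homog m k ⊓ DegSupp m {s}) :
    extD m P = 0 ↔ ∃ Q : MixedForm m,
      Q ∈ Homog m (k + 1) ⊓ DegSupp m {s - 1} ∧ coD m Q = 0 ∧ extD m Q = P := by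
  obtain ⟨hPh', hPs'⟩ := Submodule.mem_inf.mp hP
  have hPh : ∀ B, (P B).IsHomogeneous k := mem_Homog.mp hPh'
  have hPs : ∀ B : Finset (Fin m), B.card ≠ s → P B = 0 := by
    intro B hB
    exact mem_DegSupp.mp hPs' B (by simpa using hB)
  constructor
  · intro hdP
    rcases Nat.eq_zero_or_pos m with hm | hm
    · -- degenerate case: no variables, so P = 0
      have hP0 : P = 0 := by
        funext B
        refine hPs B ?_
        have hle : B.card ≤ m := by
          simpa [hm] using Finset.card_le_univ B
        omega
      exact ⟨0, Submodule.mem_inf.mpr ⟨Submodule.zero_mem _, Submodule.zero_mem _⟩,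
        by rw [map_zero], by rw [map_zero, hP0]⟩
    · set c : ℝ := ((k + s : ℕ) : ℝ) with hc
      have hcne : c ≠ 0 := by
        rw [hc]
        exact Nat.cast_ne_zero.mpr (by omega)
      -- Step 1: the homotopy gives a primitive Q0 of P
      have hkzD : extD m (kz P) = c • P := by
        funext B
        have h := homotopy_id P B
        rw [hdP, kz_zero] at h
        have h0 : (0 : MixedForm m) B = 0 := rfl
        rw [h0, add_zero, euler_id (hPh B)] at h
        rw [h, Pi.smul_apply]
        rcases eq_or_ne B.card s with hcard | hcard
        · rw [hcard, hc, Nat.cast_smul_eq_nsmul, add_comm, ← add_smul]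
        · rw [hPs B hcard]
          rw [smul_zero, smul_zero, smul_zero, add_zero]
      set Q0 : MixedForm m := c⁻¹ • kz P with hQ0def
      have hdQ0 : extD m Q0 = P := by
        rw [hQ0def, map_smul, hkzD, smul_smul, inv_mul_cancel₀ hcne, one_smul]
      have hQ0h : ∀ B, (Q0 B).IsHomogeneous (k+1) := by
        intro B
        rw [hQ0def]
        exact smul_homog (kz_homog hPh B)
      have hQ0s : ∀ B : Finset (Fin m), B.card ≠ s - 1 → Q0 B = 0 := by
        intro B hB
        rw [hQ0def, Pi.smul_apply, kz_supp (t := s - 1) ?_ B hB, smul_zero]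
        intro B' hB'
        exact hPs B' (by omega)
      -- Step 2: solve the componentwise Laplace equation Δ G = Q0
      have hex : ∀ B : Finset (Fin m),
          ∃ g : MvPolynomial (Fin m) ℝ, g.IsHomogeneous (k+3) ∧ plap m g = Q0 B :=
        fun B => lapSurj hm (hQ0h B)
      choose g hg1 hg2 using hex
      set G : MixedForm m := fun B => if B.card = s - 1 then g B else 0 with hGdef
      have hGh : ∀ B, (G B).IsHomogeneous (k+3) := by
        intro B
        rw [hGdef]
        by_cases hcard : B.card = s - 1
        · simpa [hcard] using hg1 B
        · simp only [if_neg hcard]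
          exact isHomogeneous_zero _ _ _
      have hGs : ∀ B : Finset (Fin m), B.card ≠ s - 1 → G B = 0 := by
        intro B hB
        rw [hGdef]
        exact if_neg hB
      have hlapG : ∀ B, ∑ i, pderiv i (pderiv i (G B)) = Q0 B := by
        intro B
        by_cases hcard : B.card = s - 1
        · have : G B = g B := by rw [hGdef]; exact if_pos hcard
          rw [this, ← plap_apply, hg2 B]
        · rw [hGs B hcard, hQ0s B hcard]
          apply Finset.sum_eq_zero
          intro i _
          rw [map_zero, map_zero]
      have hdec : extD m (coD m G) + coD m (extD m G) = Q0 := by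
        funext B
        have h1 : (extD m (coD m G) + coD m (extD m G)) B
            = extD m (coD m G) B + coD m (extD m G) B := rfl
        rw [h1, lap_eq G B, hlapG B]
      -- Step 3: the coclosed primitive
      refine ⟨coD m (extD m G), ?_, coD_coD _, ?_⟩
      · refine Submodule.mem_inf.mpr ⟨mem_Homog.mpr ?_, mem_DegSupp.mpr ?_⟩
        · intro B
          exact coD_homog (k := k+1) (fun B' => extD_homog (k := k+2) hGh B') B
        · intro B hB
          refine coD_supp (t := s - 1) (extD_supp (t := s - 1) hGs) B (by simpa using hB)
      · have h2 : coD m (extD m G) = Q0 - extD m (coD m G) := by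
          rw [← hdec]
          abel
        rw [h2, map_sub, hdQ0, extD_extD, sub_zero]
  · rintro ⟨Q, hQ, hcoD, hdQ⟩
    rw [← hdQ]
    exact extD_extD Q
end

section
/- For a homogeneous polynomial differential form P of degree k with values in s-vectors (s < m) on R^m, d*P = 0 if and only if there exists a homogeneous polynomial form Q of degree k+1 with values in (s+1)-vectors such that dQ = 0 and d*Q = P. -/
open MvPolynomial

namespace RPD

open Finset MvPolynomial

variable {m : ℕ}

abbrev Pol (m : ℕ) := MvPolynomial (Fin m) ℝ

noncomputable def pd (i : Fin m) : Pol m →ₗ[ℝ] Pol m := (pderiv i).toLinearMap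
noncomputable def mX (i : Fin m) : Pol m →ₗ[ℝ] Pol m := LinearMap.mulLeft ℝ (X i)

lemma pd_apply (i : Fin m) (p : Pol m) : pd i p = pderiv i p := rfl
lemma mX_apply (i : Fin m) (p : Pol m) : mX i p = X i * p := rfl

noncomputable def rop (g : ∀ _ : Fin m, Pol m →ₗ[ℝ] Pol m) : MixedForm m →ₗ[ℝ] MixedForm m :=
  LinearMap.pi fun B => ∑ i ∈ B, fsgn i B • (g i ∘ₗ LinearMap.proj (B.erase i))

noncomputable def lop (g : ∀ _ : Fin m, Pol m →ₗ[ℝ] Pol m) : MixedForm m →ₗ[ℝ] MixedForm m :=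
  LinearMap.pi fun B => ∑ i ∈ Bᶜ, fsgn i B • (g i ∘ₗ LinearMap.proj (insert i B))

lemma rop_apply (g : ∀ _ : Fin m, Pol m →ₗ[ℝ] Pol m) (P : MixedForm m) (B : Finset (Fin m)) :
    rop g P B = ∑ i ∈ B, fsgn i B • g i (P (B.erase i)) := by
  simp [rop, LinearMap.pi_apply, LinearMap.sum_apply]

lemma lop_apply (g : ∀ _ : Fin m, Pol m →ₗ[ℝ] Pol m) (P : MixedForm m) (B : Finset (Fin m)) :
    lop g P B = ∑ i ∈ Bᶜ, fsgn i B • g i (P (insert i B)) := by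
  simp [lop, LinearMap.pi_apply, LinearMap.sum_apply]

lemma extD_eq (m : ℕ) : extD m = rop (fun i => pd i) := rfl
lemma coD_eq (m : ℕ) : coD m = lop (fun i => pd i) := rfl

lemma fsgn_insert_self (i : Fin m) (B : Finset (Fin m)) : fsgn i (insert i B) = fsgn i B := by
  unfold fsgn
  congr 2
  rw [Finset.filter_insert, if_neg (lt_irrefl i)]

lemma fsgn_erase_self (i : Fin m) (B : Finset (Fin m)) : fsgn i (B.erase i) = fsgn i B := by
  unfold fsgn
  congr 2
  rw [Finset.filter_erase]
  exact Finset.erase_eq_of_notMem (by simp)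

lemma fsgn_mul_self (i : Fin m) (B : Finset (Fin m)) : fsgn i B * fsgn i B = 1 := by
  unfold fsgn
  rw [← pow_add, ← two_mul, pow_mul]
  norm_num

lemma fsgn_insert_of_ne {i j : Fin m} (hij : i ≠ j) {B : Finset (Fin m)} (hi : i ∉ B) :
    fsgn j (insert i B) = (if i < j then -1 else 1) * fsgn j B := by
  unfold fsgn
  rw [Finset.filter_insert]
  by_cases h : i < j
  · rw [if_pos h, if_pos h, Finset.card_insert_of_notMem (fun hmem => hi (Finset.mem_of_mem_filter _ hmem)), pow_succ]
    ring
  · rw [if_neg h, if_neg h, one_mul]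

lemma fsgn_erase_of_ne {i j : Fin m} {B : Finset (Fin m)} (hj : j ∈ B) :
    fsgn i (B.erase j) = (if j < i then -1 else 1) * fsgn i B := by
  unfold fsgn
  rw [Finset.filter_erase]
  by_cases h : j < i
  · rw [if_pos h]
    have hjf : j ∈ B.filter (fun x => x < i) := Finset.mem_filter.mpr ⟨hj, h⟩
    rw [Finset.card_erase_of_mem hjf]
    obtain ⟨c, hc⟩ : ∃ c, (B.filter (fun x => x < i)).card = c + 1 :=
      ⟨(B.filter (fun x => x < i)).card - 1,
        (Nat.succ_pred_eq_of_pos (Finset.card_pos.mpr ⟨j, hjf⟩)).symm⟩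
    rw [hc]
    simp [pow_succ]
  · rw [if_neg h, one_mul, Finset.erase_eq_of_notMem]
    intro hmem
    exact h (Finset.mem_filter.mp hmem).2

lemma fsgn_swap_out {i j : Fin m} {B : Finset (Fin m)} (hij : i ≠ j) (hi : i ∉ B) (hj : j ∉ B) :
    fsgn j B * fsgn i (insert j B) = -(fsgn i B * fsgn j (insert i B)) := by
  rw [fsgn_insert_of_ne hij hi, fsgn_insert_of_ne hij.symm hj]
  rcases lt_or_gt_of_ne hij with h | h
  · rw [if_pos h, if_neg (asymm h)]; ring
  · rw [if_neg (asymm h), if_pos h]; ring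

lemma fsgn_swap_in {i j : Fin m} {B : Finset (Fin m)} (hij : i ≠ j) (hi : i ∈ B) (hj : j ∈ B) :
    fsgn j B * fsgn i (B.erase j) = -(fsgn i B * fsgn j (B.erase i)) := by
  rw [fsgn_erase_of_ne hj, fsgn_erase_of_ne hi]
  rcases lt_or_gt_of_ne hij with h | h
  · rw [if_pos h, if_neg (asymm h)]; ring
  · rw [if_neg (asymm h), if_pos h]; ring

lemma fsgn_swap_cross {i j : Fin m} {B : Finset (Fin m)} (hi : i ∉ B) (hj : j ∈ B) :
    fsgn j B * fsgn i (B.erase j) = -(fsgn i B * fsgn j (insert i B)) := by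
  have hij : i ≠ j := fun h => hi (h ▸ hj)
  rw [fsgn_erase_of_ne hj, fsgn_insert_of_ne hij hi]
  rcases lt_or_gt_of_ne hij with h | h
  · rw [if_neg (asymm h), if_pos h]; ring
  · rw [if_pos h, if_neg (asymm h)]; ring

end RPD
namespace RPD

variable {m : ℕ}

lemma lop_expand (g h : ∀ _ : Fin m, Pol m →ₗ[ℝ] Pol m) (P : MixedForm m) (B : Finset (Fin m)) :
    lop g (lop h P) B
      = ∑ i ∈ Bᶜ, ∑ j ∈ (insert i B)ᶜ,
          (fsgn i B * fsgn j (insert i B)) • g i (h j (P (insert j (insert i B)))) := by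
  rw [lop_apply]
  refine Finset.sum_congr rfl fun i _ => ?_
  rw [lop_apply, map_sum, Finset.smul_sum]
  refine Finset.sum_congr rfl fun j _ => ?_
  rw [map_smul, smul_smul]

lemma lop_lop (g h : ∀ _ : Fin m, Pol m →ₗ[ℝ] Pol m)
    (hc : ∀ i j, i ≠ j → ∀ p, g i (h j p) = h j (g i p)) (P : MixedForm m) (B : Finset (Fin m)) :
    lop g (lop h P) B + lop h (lop g P) B = 0 := by
  rw [lop_expand, lop_expand]
  have swap : ∑ i ∈ Bᶜ, ∑ j ∈ (insert i B)ᶜ,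
        (fsgn i B * fsgn j (insert i B)) • h i (g j (P (insert j (insert i B))))
      = ∑ i ∈ Bᶜ, ∑ j ∈ (insert i B)ᶜ,
        (fsgn j B * fsgn i (insert j B)) • h j (g i (P (insert i (insert j B)))) := by
    refine Finset.sum_comm' ?_
    intro x y
    simp only [Finset.mem_compl, Finset.mem_insert, not_or]
    constructor
    · rintro ⟨hx, hy1, hy2⟩
      exact ⟨⟨fun e => hy1 e.symm, hx⟩, hy2⟩
    · rintro ⟨⟨hxy, hx⟩, hy⟩
      exact ⟨hx, fun e => hxy e.symm, hy⟩
  rw [swap]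
  rw [← Finset.sum_add_distrib]
  refine Finset.sum_eq_zero fun i hi => ?_
  rw [← Finset.sum_add_distrib]
  refine Finset.sum_eq_zero fun j hj => ?_
  have hiB : i ∉ B := Finset.mem_compl.mp hi
  have hj' := Finset.mem_compl.mp hj
  have hjB : j ∉ B := fun hh => hj' (Finset.mem_insert_of_mem hh)
  have hij : i ≠ j := fun e => hj' (e ▸ Finset.mem_insert_self i B)
  rw [Finset.insert_comm, hc i j hij, fsgn_swap_out hij.symm hjB hiB, neg_smul]
  abel

end RPD
namespace RPD

variable {m : ℕ}

lemma rop_expand (g h : ∀ _ : Fin m, Pol m →ₗ[ℝ] Pol m) (P : MixedForm m) (B : Finset (Fin m)) :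
    rop g (rop h P) B
      = ∑ i ∈ B, ∑ j ∈ B.erase i,
          (fsgn i B * fsgn j (B.erase i)) • g i (h j (P ((B.erase i).erase j))) := by
  rw [rop_apply]
  refine Finset.sum_congr rfl fun i _ => ?_
  rw [rop_apply, map_sum, Finset.smul_sum]
  refine Finset.sum_congr rfl fun j _ => ?_
  rw [map_smul, smul_smul]

lemma rop_rop (g h : ∀ _ : Fin m, Pol m →ₗ[ℝ] Pol m)
    (hc : ∀ i j, i ≠ j → ∀ p, g i (h j p) = h j (g i p)) (P : MixedForm m) (B : Finset (Fin m)) :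
    rop g (rop h P) B + rop h (rop g P) B = 0 := by
  rw [rop_expand, rop_expand]
  have swap : ∑ i ∈ B, ∑ j ∈ B.erase i,
        (fsgn i B * fsgn j (B.erase i)) • h i (g j (P ((B.erase i).erase j)))
      = ∑ i ∈ B, ∑ j ∈ B.erase i,
        (fsgn j B * fsgn i (B.erase j)) • h j (g i (P ((B.erase j).erase i))) := by
    refine Finset.sum_comm' ?_
    intro x y
    simp only [Finset.mem_erase]
    constructor
    · rintro ⟨hx, hy1, hy2⟩
      exact ⟨⟨fun e => hy1 e.symm, hx⟩, hy2⟩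
    · rintro ⟨⟨hxy, hx⟩, hy⟩
      exact ⟨hx, fun e => hxy e.symm, hy⟩
  rw [swap, ← Finset.sum_add_distrib]
  refine Finset.sum_eq_zero fun i hi => ?_
  rw [← Finset.sum_add_distrib]
  refine Finset.sum_eq_zero fun j hj => ?_
  have hjB : j ∈ B := (Finset.mem_erase.mp hj).2
  have hij : i ≠ j := fun e => (Finset.mem_erase.mp hj).1 e.symm
  rw [Finset.erase_right_comm, hc i j hij, fsgn_swap_in hij hi hjB, neg_smul]
  abel

lemma lop_rop (g h : ∀ _ : Fin m, Pol m →ₗ[ℝ] Pol m)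
    (hc : ∀ i j, i ≠ j → ∀ p, g i (h j p) = h j (g i p)) (P : MixedForm m) (B : Finset (Fin m)) :
    lop g (rop h P) B + rop h (lop g P) B
      = (∑ i ∈ Bᶜ, g i (h i (P B))) + ∑ i ∈ B, h i (g i (P B)) := by
  have e1 : lop g (rop h P) B
      = (∑ i ∈ Bᶜ, g i (h i (P B)))
        + ∑ i ∈ Bᶜ, ∑ j ∈ B,
            (fsgn i B * fsgn j (insert i B)) • g i (h j (P (insert i (B.erase j)))) := by
    rw [lop_apply, ← Finset.sum_add_distrib]
    refine Finset.sum_congr rfl fun i hi => ?_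
    have hiB : i ∉ B := Finset.mem_compl.mp hi
    rw [rop_apply, Finset.sum_insert (by simpa using hiB), map_add, smul_add, map_sum,
      Finset.smul_sum]
    congr 1
    · rw [map_smul, smul_smul, fsgn_insert_self, fsgn_mul_self, one_smul,
        Finset.erase_insert hiB]
    · refine Finset.sum_congr rfl fun j hj => ?_
      have hij : i ≠ j := fun e => hiB (e ▸ hj)
      rw [map_smul, smul_smul, Finset.erase_insert_of_ne hij]
  have e2 : rop h (lop g P) B
      = (∑ j ∈ B, h j (g j (P B)))
        + ∑ j ∈ B, ∑ i ∈ Bᶜ,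
            (fsgn j B * fsgn i (B.erase j)) • h j (g i (P (insert i (B.erase j)))) := by
    rw [rop_apply, ← Finset.sum_add_distrib]
    refine Finset.sum_congr rfl fun j hj => ?_
    rw [lop_apply, Finset.compl_erase, Finset.sum_insert (by simpa using hj), map_add, smul_add,
      map_sum, Finset.smul_sum]
    congr 1
    · rw [map_smul, smul_smul, fsgn_erase_self, fsgn_mul_self, one_smul,
        Finset.insert_erase hj]
    · refine Finset.sum_congr rfl fun i hi => ?_
      rw [map_smul, smul_smul]
  rw [e1, e2, add_add_add_comm]
  have cancel : ∑ i ∈ Bᶜ, ∑ j ∈ B,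
        (fsgn i B * fsgn j (insert i B)) • g i (h j (P (insert i (B.erase j))))
      + ∑ j ∈ B, ∑ i ∈ Bᶜ,
        (fsgn j B * fsgn i (B.erase j)) • h j (g i (P (insert i (B.erase j)))) = 0 := by
    rw [Finset.sum_comm (s := B), ← Finset.sum_add_distrib]
    refine Finset.sum_eq_zero fun i hi => ?_
    rw [← Finset.sum_add_distrib]
    refine Finset.sum_eq_zero fun j hj => ?_
    have hiB : i ∉ B := Finset.mem_compl.mp hi
    have hij : i ≠ j := fun e => hiB (e ▸ hj)
    rw [hc i j hij, fsgn_swap_cross hiB hj, neg_smul]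
    abel
  rw [cancel, add_zero]

end RPD
namespace RPD

open MvPolynomial

variable {m : ℕ}

lemma degw (d : Fin m →₀ ℕ) : (Finsupp.weight (1 : Fin m → ℕ)) d = ∑ i, d i := by
  rw [Finsupp.weight_apply, Finsupp.sum_fintype]
  · simp
  · intro i; simp

lemma isHom_coeff {p : Pol m} {k : ℕ} (hp : p.IsHomogeneous k) {d : Fin m →₀ ℕ}
    (hd : coeff d p ≠ 0) : ∑ i, d i = k := by
  have h2 := hp hd
  rwa [degw] at h2

lemma degree_univ (d : Fin m →₀ ℕ) : d.degree = ∑ i, d i :=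
  Finset.sum_subset (Finset.subset_univ _) (fun _ _ hi => Finsupp.notMem_support_iff.mp hi)

lemma comm_mX_mX (i j : Fin m) (p : Pol m) : mX i (mX j p) = mX j (mX i p) := by
  simp only [mX_apply]; ring

lemma comm_pd_mX {i j : Fin m} (hij : i ≠ j) (p : Pol m) : pd i (mX j p) = mX j (pd i p) := by
  simp only [pd_apply, mX_apply, pderiv_mul, pderiv_X_of_ne hij.symm, zero_mul, zero_add]

lemma comm_pd_pd (i j : Fin m) (p : Pol m) : pd i (pd j p) = pd j (pd i p) := by
  rcases eq_or_ne i j with rfl | hij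
  · rfl
  · induction p using MvPolynomial.induction_on' with
    | add p q hp hq => simp only [pd_apply] at hp hq ⊢; simp [hp, hq]
    | monomial d a =>
      simp only [pd_apply, pderiv_monomial]
      rw [tsub_tsub, tsub_tsub, add_comm (Finsupp.single j 1)]
      congr 1
      rw [Finsupp.tsub_apply, Finsupp.tsub_apply,
        Finsupp.single_eq_of_ne' hij, Finsupp.single_eq_of_ne' hij.symm,
        Nat.sub_zero, Nat.sub_zero]
      ring

lemma euler_monomial (d : Fin m →₀ ℕ) (a : ℝ) :
    ∑ i, (X i : Pol m) * pderiv i (monomial d a) = (∑ i, d i) • monomial d a := by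
  rw [Finset.sum_smul]
  refine Finset.sum_congr rfl fun i _ => ?_
  rw [pderiv_monomial]
  rcases Nat.eq_zero_or_pos (d i) with h0 | hpos
  · simp [h0]
  · rw [X, monomial_mul, one_mul]
    have he : Finsupp.single i 1 + (d - Finsupp.single i 1) = d := by
      rw [add_comm]
      exact tsub_add_cancel_of_le (Finsupp.single_le_iff.mpr hpos)
    rw [he, ← Nat.cast_smul_eq_nsmul ℝ (d i), smul_monomial, smul_eq_mul, mul_comm]

lemma euler {p : Pol m} {k : ℕ} (hp : p.IsHomogeneous k) :
    ∑ i, (X i : Pol m) * pderiv i p = k • p := by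
  have h1 : ∑ i, (X i : Pol m) * pderiv i p
      = ∑ d ∈ p.support, ∑ i, (X i : Pol m) * pderiv i (monomial d (coeff d p)) := by
    rw [Finset.sum_comm]
    refine Finset.sum_congr rfl fun i _ => ?_
    rw [← Finset.mul_sum, ← map_sum, support_sum_monomial_coeff]
  rw [h1]
  have h2 : ∀ d ∈ p.support,
      ∑ i, (X i : Pol m) * pderiv i (monomial d (coeff d p)) = k • monomial d (coeff d p) := by
    intro d hd
    rw [euler_monomial, isHom_coeff hp (mem_support_iff.mp hd)]
  rw [Finset.sum_congr rfl h2, ← Finset.smul_sum, support_sum_monomial_coeff]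

lemma isHom_pderiv {p : Pol m} {k : ℕ} (hp : p.IsHomogeneous (k+1)) (i : Fin m) :
    (pderiv i p).IsHomogeneous k := by
  have h1 : pderiv i p = ∑ d ∈ p.support, pderiv i (monomial d (coeff d p)) := by
    rw [← map_sum, support_sum_monomial_coeff]
  rw [h1]
  refine IsHomogeneous.sum _ _ _ fun d hd => ?_
  rw [pderiv_monomial]
  rcases Nat.eq_zero_or_pos (d i) with h0 | hpos
  · rw [h0]; simp only [Nat.cast_zero, mul_zero, map_zero]
    exact isHomogeneous_zero _ _ _
  · apply isHomogeneous_monomial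
    rw [degree_univ]
    have hsum : ∑ j, d j = k + 1 := isHom_coeff hp (mem_support_iff.mp hd)
    rw [← Finset.add_sum_erase _ _ (Finset.mem_univ i)] at hsum ⊢
    have hterm : ∀ j ∈ Finset.univ.erase i, ((d - Finsupp.single i 1 : Fin m →₀ ℕ)) j = d j := by
      intro j hj
      rw [Finsupp.tsub_apply, Finsupp.single_eq_of_ne' (Finset.ne_of_mem_erase hj).symm,
        Nat.sub_zero]
    rw [Finset.sum_congr rfl hterm]
    have hi : ((d - Finsupp.single i 1 : Fin m →₀ ℕ)) i = d i - 1 := by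
      rw [Finsupp.tsub_apply, Finsupp.single_eq_same]
    rw [hi]
    show d i - 1 + ∑ x ∈ Finset.univ.erase i, d x = k
    omega

end RPD
namespace RPD

open MvPolynomial

variable {m : ℕ}

noncomputable def eps (m : ℕ) : MixedForm m →ₗ[ℝ] MixedForm m := rop (fun i => mX i)
noncomputable def iot (m : ℕ) : MixedForm m →ₗ[ℝ] MixedForm m := lop (fun i => mX i)
noncomputable def rr (m : ℕ) : Pol m := ∑ i, X i * X i

lemma hc_XX : ∀ i j : Fin m, i ≠ j → ∀ p, mX i (mX j p) = mX j (mX i p) :=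
  fun i j _ p => comm_mX_mX i j p
lemma hc_dd : ∀ i j : Fin m, i ≠ j → ∀ p, pd i (pd j p) = pd j (pd i p) :=
  fun i j _ p => comm_pd_pd i j p
lemma hc_Xd : ∀ i j : Fin m, i ≠ j → ∀ p, mX i (pd j p) = pd j (mX i p) :=
  fun _ _ h p => (comm_pd_mX h.symm p).symm
lemma hc_dX : ∀ i j : Fin m, i ≠ j → ∀ p, pd i (mX j p) = mX j (pd i p) :=
  fun _ _ h p => comm_pd_mX h p

lemma half_zero {M : Type*} [AddCommGroup M] [Module ℝ M] {a : M} (h : a + a = 0) : a = 0 := by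
  have h2 : (2:ℝ) • a = 0 := by rw [two_smul]; exact h
  simpa using (smul_eq_zero.mp h2).resolve_left (by norm_num)

lemma coD_coD (P : MixedForm m) : coD m (coD m P) = 0 := by
  funext B
  have h := lop_lop (fun i => pd i) (fun i => pd i) hc_dd P B
  rw [coD_eq]
  exact half_zero h

lemma extD_extD (P : MixedForm m) : extD m (extD m P) = 0 := by
  funext B
  have h := rop_rop (fun i => pd i) (fun i => pd i) hc_dd P B
  rw [extD_eq]
  exact half_zero h

lemma iot_iot (P : MixedForm m) : iot m (iot m P) = 0 := by
  funext B
  have h := lop_lop (fun i => mX i) (fun i => mX i) hc_XX P B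
  rw [iot]
  exact half_zero h

lemma coD_iot_anti (P : MixedForm m) (B : Finset (Fin m)) :
    coD m (iot m P) B + iot m (coD m P) B = 0 := by
  rw [coD_eq, iot]
  exact lop_lop (fun i => pd i) (fun i => mX i) hc_dX P B

/-- helper: `∂ᵢ(Xᵢ q) = q + Xᵢ ∂ᵢ q`. -/
lemma pd_mX_self (i : Fin m) (q : Pol m) : pd i (mX i q) = q + X i * pderiv i q := by
  rw [pd_apply, mX_apply, pderiv_mul, pderiv_X_self, one_mul]

lemma isHom_smul {p : Pol m} {n : ℕ} (c : ℝ) (h : p.IsHomogeneous n) :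
    (c • p).IsHomogeneous n :=
  (homogeneousSubmodule (Fin m) ℝ n).smul_mem c h

/-- `{ι, d} = (card + k)` on `Homog k`. -/
lemma iot_extD_homog {P : MixedForm m} {k : ℕ} (hP : ∀ A, (P A).IsHomogeneous k)
    (B : Finset (Fin m)) :
    iot m (extD m P) B + extD m (iot m P) B = (B.card + k) • P B := by
  rw [iot, extD_eq]
  rw [lop_rop (fun i => mX i) (fun i => pd i) hc_Xd P B]
  have h1 : ∀ i ∈ B, pd i (mX i (P B)) = P B + X i * pderiv i (P B) :=
    fun i _ => pd_mX_self i (P B)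
  rw [Finset.sum_congr rfl h1, Finset.sum_add_distrib, Finset.sum_const]
  have h2 : ∀ i ∈ Bᶜ, mX i (pd i (P B)) = X i * pderiv i (P B) := fun i _ => rfl
  rw [Finset.sum_congr rfl h2]
  have h3 : (∑ i ∈ Bᶜ, X i * pderiv i (P B)) + ∑ i ∈ B, X i * pderiv i (P B)
      = k • P B := by
    rw [Finset.sum_compl_add_sum]
    exact euler (hP B)
  rw [add_smul]
  calc (∑ i ∈ Bᶜ, X i * pderiv i (P B))
        + (B.card • P B + ∑ i ∈ B, X i * pderiv i (P B))
      = B.card • P B + ((∑ i ∈ Bᶜ, X i * pderiv i (P B)) + ∑ i ∈ B, X i * pderiv i (P B)) := by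
        abel
    _ = B.card • P B + k • P B := by rw [h3]

/-- `{d*, ε} = (m - card + k)` on `Homog k`. -/
lemma coD_eps_homog {P : MixedForm m} {k : ℕ} (hP : ∀ A, (P A).IsHomogeneous k)
    (B : Finset (Fin m)) :
    coD m (eps m P) B + eps m (coD m P) B = ((m - B.card) + k) • P B := by
  rw [eps, coD_eq]
  rw [lop_rop (fun i => pd i) (fun i => mX i) hc_dX P B]
  have h1 : ∀ i ∈ Bᶜ, pd i (mX i (P B)) = P B + X i * pderiv i (P B) :=
    fun i _ => pd_mX_self i (P B)
  rw [Finset.sum_congr rfl h1, Finset.sum_add_distrib, Finset.sum_const]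
  have hcard : Bᶜ.card = m - B.card := by
    rw [Finset.card_compl, Fintype.card_fin]
  have h2 : ∀ i ∈ B, mX i (pd i (P B)) = X i * pderiv i (P B) := fun i _ => rfl
  rw [Finset.sum_congr rfl h2, hcard]
  have h3 : (∑ i ∈ Bᶜ, X i * pderiv i (P B)) + ∑ i ∈ B, X i * pderiv i (P B)
      = k • P B := by
    rw [Finset.sum_compl_add_sum]
    exact euler (hP B)
  rw [add_smul]
  calc ((m - B.card) • P B + ∑ i ∈ Bᶜ, X i * pderiv i (P B))
        + ∑ i ∈ B, X i * pderiv i (P B)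
      = (m - B.card) • P B + ((∑ i ∈ Bᶜ, X i * pderiv i (P B)) + ∑ i ∈ B, X i * pderiv i (P B)) := by
        abel
    _ = (m - B.card) • P B + k • P B := by rw [h3]

/-- `{ι, ε} = r²`. -/
lemma iot_eps (P : MixedForm m) (B : Finset (Fin m)) :
    iot m (eps m P) B + eps m (iot m P) B = rr m * P B := by
  rw [iot, eps, lop_rop (fun i => mX i) (fun i => mX i) hc_XX P B]
  have h1 : ∀ i : Fin m, mX i (mX i (P B)) = X i * X i * P B := by
    intro i; rw [mX_apply, mX_apply, mul_assoc]
  rw [Finset.sum_congr rfl (fun i _ => h1 i), Finset.sum_congr rfl (fun i _ => h1 i),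
    Finset.sum_compl_add_sum, rr, Finset.sum_mul]

lemma pderiv_rr (i : Fin m) : pderiv i (rr m) = (2:ℝ) • X i := by
  rw [rr, map_sum]
  rw [Finset.sum_eq_single i]
  · rw [pderiv_mul, pderiv_X_self, one_mul, mul_one, two_smul]
  · intro j _ hj
    simp [pderiv_mul, pderiv_X_of_ne hj]
  · intro h; exact absurd (Finset.mem_univ i) h

/-- `[d*, r²] = 2ι`. -/
lemma coD_mulR (P : MixedForm m) (B : Finset (Fin m)) :
    coD m (fun A => rr m * P A) B = (2:ℝ) • iot m P B + rr m * coD m P B := by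
  rw [coD_eq, iot, lop_apply, lop_apply, lop_apply]
  have h1 : ∀ i ∈ Bᶜ, fsgn i B • pd i (rr m * P (insert i B))
      = (2:ℝ) • (fsgn i B • mX i (P (insert i B)))
        + rr m * (fsgn i B • pd i (P (insert i B))) := by
    intro i _
    rw [pd_apply, pderiv_mul, pderiv_rr, mX_apply, pd_apply]
    rw [smul_add, smul_mul_assoc, smul_comm (fsgn i B) (2:ℝ), mul_smul_comm]
  rw [Finset.sum_congr rfl h1, Finset.sum_add_distrib, ← Finset.smul_sum, ← Finset.mul_sum]

lemma supp_rop (g : ∀ _ : Fin m, Pol m →ₗ[ℝ] Pol m) {P : MixedForm m} {t : ℕ}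
    (h : ∀ A, A.card ≠ t → P A = 0) :
    ∀ B : Finset (Fin m), B.card ≠ t + 1 → rop g P B = 0 := by
  intro B hB
  rw [rop_apply]
  refine Finset.sum_eq_zero fun i hi => ?_
  have hcard : (B.erase i).card ≠ t := by
    rw [Finset.card_erase_of_mem hi]
    have := Finset.card_pos.mpr ⟨i, hi⟩
    omega
  rw [h _ hcard, map_zero, smul_zero]

lemma supp_lop (g : ∀ _ : Fin m, Pol m →ₗ[ℝ] Pol m) {P : MixedForm m} {t : ℕ}
    (h : ∀ A, A.card ≠ t → P A = 0) :
    ∀ B : Finset (Fin m), B.card + 1 ≠ t → lop g P B = 0 := by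
  intro B hB
  rw [lop_apply]
  refine Finset.sum_eq_zero fun i hi => ?_
  have hcard : (insert i B).card ≠ t := by
    rw [Finset.card_insert_of_notMem (Finset.mem_compl.mp hi)]
    exact hB
  rw [h _ hcard, map_zero, smul_zero]

lemma homog_eps {P : MixedForm m} {k : ℕ} (h : ∀ A, (P A).IsHomogeneous k) :
    ∀ B, ((eps m P) B).IsHomogeneous (k+1) := by
  intro B
  rw [eps, rop_apply]
  refine IsHomogeneous.sum _ _ _ fun i _ => ?_
  refine isHom_smul _ ?_
  rw [mX_apply]
  simpa [add_comm] using (isHomogeneous_X ℝ i).mul (h (B.erase i))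

lemma homog_iot {P : MixedForm m} {k : ℕ} (h : ∀ A, (P A).IsHomogeneous k) :
    ∀ B, ((iot m P) B).IsHomogeneous (k+1) := by
  intro B
  rw [iot, lop_apply]
  refine IsHomogeneous.sum _ _ _ fun i _ => ?_
  refine isHom_smul _ ?_
  rw [mX_apply]
  simpa [add_comm] using (isHomogeneous_X ℝ i).mul (h (insert i B))

lemma homog_extD {P : MixedForm m} {k : ℕ} (h : ∀ A, (P A).IsHomogeneous (k+1)) :
    ∀ B, ((extD m P) B).IsHomogeneous k := by
  intro B
  rw [extD_eq, rop_apply]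
  refine IsHomogeneous.sum _ _ _ fun i _ => ?_
  exact isHom_smul _ (isHom_pderiv (h _) i)

lemma homog_coD {P : MixedForm m} {k : ℕ} (h : ∀ A, (P A).IsHomogeneous (k+1)) :
    ∀ B, ((coD m P) B).IsHomogeneous k := by
  intro B
  rw [coD_eq, lop_apply]
  refine IsHomogeneous.sum _ _ _ fun i _ => ?_
  exact isHom_smul _ (isHom_pderiv (h _) i)

end RPD
namespace RPD

open MvPolynomial

variable {m : ℕ}

noncomputable def wt (d : Fin m →₀ ℕ) : ℝ := ∏ i, (Nat.factorial (d i) : ℝ)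

lemma wt_pos (d : Fin m →₀ ℕ) : 0 < wt d :=
  Finset.prod_pos fun i _ => Nat.cast_pos.mpr (Nat.factorial_pos _)

lemma wt_add_single (d : Fin m →₀ ℕ) (i : Fin m) :
    wt (d + Finsupp.single i 1) = wt d * (d i + 1) := by
  rw [wt, wt, ← Finset.mul_prod_erase Finset.univ _ (Finset.mem_univ i),
    ← Finset.mul_prod_erase Finset.univ (fun j => (Nat.factorial (d j) : ℝ)) (Finset.mem_univ i)]
  have h1 : ∀ j ∈ Finset.univ.erase i,
      (Nat.factorial ((d + Finsupp.single i 1 : Fin m →₀ ℕ) j) : ℝ) = (Nat.factorial (d j) : ℝ) := by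
    intro j hj
    rw [Finsupp.add_apply, Finsupp.single_eq_of_ne' (Finset.ne_of_mem_erase hj).symm, add_zero]
  rw [Finset.prod_congr rfl h1]
  have h2 : (d + Finsupp.single i 1 : Fin m →₀ ℕ) i = d i + 1 := by
    rw [Finsupp.add_apply, Finsupp.single_eq_same]
  rw [h2, Nat.factorial_succ, Nat.cast_mul, Nat.cast_add, Nat.cast_one]
  ring

noncomputable def fisch (p q : Pol m) : ℝ := ∑ d ∈ p.support, wt d * coeff d p * coeff d q

lemma fisch_subset {p : Pol m} (q : Pol m) {T : Finset (Fin m →₀ ℕ)} (hT : p.support ⊆ T) :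
    fisch p q = ∑ d ∈ T, wt d * coeff d p * coeff d q :=
  Finset.sum_subset hT (fun d _ hd => by rw [notMem_support_iff.mp hd]; ring)

lemma fisch_zero_left (q : Pol m) : fisch 0 q = 0 := by
  simp [fisch]

lemma fisch_add_left (p p' q : Pol m) : fisch (p + p') q = fisch p q + fisch p' q := by
  classical
  rw [fisch_subset q (T := p.support ∪ p'.support) support_add,
    fisch_subset q (T := p.support ∪ p'.support) Finset.subset_union_left,
    fisch_subset q (T := p.support ∪ p'.support) Finset.subset_union_right,
    ← Finset.sum_add_distrib]
  refine Finset.sum_congr rfl fun d _ => ?_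
  rw [coeff_add]
  ring

lemma fisch_smul_left (c : ℝ) (p q : Pol m) : fisch (c • p) q = c * fisch p q := by
  rw [fisch_subset q (T := p.support) support_smul, fisch, Finset.mul_sum]
  refine Finset.sum_congr rfl fun d _ => ?_
  rw [coeff_smul, smul_eq_mul]
  ring

lemma fisch_sum_left {ι : Type*} (s : Finset ι) (f : ι → Pol m) (q : Pol m) :
    fisch (∑ j ∈ s, f j) q = ∑ j ∈ s, fisch (f j) q := by
  classical
  induction s using Finset.induction_on with
  | empty => simp [fisch_zero_left]
  | insert _ _ hnot ih =>
      rw [Finset.sum_insert hnot, Finset.sum_insert hnot, fisch_add_left, ih]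

lemma fisch_zero_right (p : Pol m) : fisch p 0 = 0 := by
  simp [fisch]

lemma fisch_add_right (p q q' : Pol m) : fisch p (q + q') = fisch p q + fisch p q' := by
  rw [fisch, fisch, fisch, ← Finset.sum_add_distrib]
  refine Finset.sum_congr rfl fun d _ => ?_
  rw [coeff_add]
  ring

lemma fisch_smul_right (c : ℝ) (p q : Pol m) : fisch p (c • q) = c * fisch p q := by
  rw [fisch, fisch, Finset.mul_sum]
  refine Finset.sum_congr rfl fun d _ => ?_
  rw [coeff_smul, smul_eq_mul]
  ring

lemma fisch_sum_right {ι : Type*} (s : Finset ι) (p : Pol m) (f : ι → Pol m) :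
    fisch p (∑ j ∈ s, f j) = ∑ j ∈ s, fisch p (f j) := by
  classical
  induction s using Finset.induction_on with
  | empty => simp [fisch_zero_right]
  | insert _ _ hnot ih =>
      rw [Finset.sum_insert hnot, Finset.sum_insert hnot, fisch_add_right, ih]

lemma fisch_monomial_left (d : Fin m →₀ ℕ) (a : ℝ) (q : Pol m) :
    fisch (monomial d a) q = wt d * a * coeff d q := by
  rcases eq_or_ne a 0 with rfl | ha
  · simp [fisch]
  · rw [fisch, support_monomial, if_neg ha, Finset.sum_singleton, coeff_monomial, if_pos rfl]

lemma fisch_adj (i : Fin m) (p q : Pol m) :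
    fisch ((X i : Pol m) * p) q = fisch p (pderiv i q) := by
  induction p using MvPolynomial.induction_on' with
  | add p p' hp hp' => rw [mul_add, fisch_add_left, fisch_add_left, hp, hp']
  | monomial u a =>
    induction q using MvPolynomial.induction_on' with
    | add q q' hq hq' => rw [map_add, fisch_add_right, fisch_add_right, hq, hq']
    | monomial v b =>
      have hXmul : (X i : Pol m) * monomial u a = monomial (u + Finsupp.single i 1) a := by
        rw [X, monomial_mul, one_mul, add_comm]
      rw [hXmul, pderiv_monomial, fisch_monomial_left, fisch_monomial_left,
        coeff_monomial, coeff_monomial]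
      rcases Nat.eq_zero_or_pos (v i) with h0 | hpos
      · rw [if_neg, h0]
        · split_ifs <;> simp
        · intro h
          have := congrArg (fun f : Fin m →₀ ℕ => f i) h
          simp [Finsupp.add_apply, Finsupp.single_eq_same, h0] at this
      · have hle : Finsupp.single i 1 ≤ v := Finsupp.single_le_iff.mpr hpos
        by_cases hvu : v = u + Finsupp.single i 1
        · have h2 : v - Finsupp.single i 1 = u := by
            rw [hvu]
            ext j
            rw [Finsupp.tsub_apply, Finsupp.add_apply]
            rcases eq_or_ne j i with rfl | hji
            · rw [Finsupp.single_eq_same]; omega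
            · rw [Finsupp.single_eq_of_ne' hji.symm]; omega
          rw [if_pos hvu, if_pos h2, wt_add_single]
          have h3 : (v i : ℝ) = (u i : ℝ) + 1 := by
            rw [hvu]
            simp [Finsupp.add_apply, Finsupp.single_eq_same]
          rw [h3]
          ring
        · have h2 : v - Finsupp.single i 1 ≠ u := by
            intro h
            apply hvu
            rw [← h, tsub_add_cancel_of_le hle]
          rw [if_neg hvu, if_neg h2]
          ring

lemma fisch_self_nonneg (p : Pol m) : 0 ≤ fisch p p :=
  Finset.sum_nonneg fun d _ => by
    rw [mul_assoc]
    exact mul_nonneg (wt_pos d).le (mul_self_nonneg _)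

lemma fisch_self_pos {p : Pol m} (hp : p ≠ 0) : 0 < fisch p p := by
  have hne : p.support.Nonempty :=
    Finset.nonempty_iff_ne_empty.mpr fun h => hp (support_eq_empty.mp h)
  have hterm : ∀ d ∈ p.support, 0 < wt d * coeff d p * coeff d p := by
    intro d hd
    rw [mul_assoc]
    exact mul_pos (wt_pos d) (mul_self_pos.mpr (mem_support_iff.mp hd))
  exact Finset.sum_pos hterm hne

end RPD
namespace RPD

open MvPolynomial

variable {m : ℕ}

noncomputable def BF (f g : MixedForm m) : ℝ := ∑ S : Finset (Fin m), fisch (f S) (g S)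

lemma BF_add_left (f f' g : MixedForm m) : BF (f + f') g = BF f g + BF f' g := by
  rw [BF, BF, BF, ← Finset.sum_add_distrib]
  exact Finset.sum_congr rfl fun S _ => fisch_add_left _ _ _

lemma BF_smul_left (c : ℝ) (f g : MixedForm m) : BF (c • f) g = c * BF f g := by
  rw [BF, BF, Finset.mul_sum]
  exact Finset.sum_congr rfl fun S _ => fisch_smul_left _ _ _

lemma BF_zero_right (f : MixedForm m) : BF f 0 = 0 := by
  rw [BF]
  exact Finset.sum_eq_zero fun S _ => fisch_zero_right _

lemma BF_self_eq_zero {f : MixedForm m} (h : BF f f = 0) : f = 0 := by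
  by_contra hne
  have hS : ∃ S, f S ≠ 0 := by
    by_contra hall
    push_neg at hall
    exact hne (funext hall)
  obtain ⟨S₀, hS₀⟩ := hS
  have hpos : 0 < BF f f := by
    refine Finset.sum_pos' (fun S _ => fisch_self_nonneg _) ⟨S₀, Finset.mem_univ _, ?_⟩
    exact fisch_self_pos hS₀
  exact absurd h (ne_of_gt hpos)

lemma sum_insert_reindex (F : Finset (Fin m) → Fin m → ℝ) :
    ∑ S : Finset (Fin m), ∑ i ∈ Sᶜ, F (insert i S) i
      = ∑ S : Finset (Fin m), ∑ i ∈ S, F S i := by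
  rw [Finset.sum_sigma' Finset.univ, Finset.sum_sigma' Finset.univ]
  refine Finset.sum_nbij' (fun x => ⟨insert x.2 x.1, x.2⟩) (fun x => ⟨x.1.erase x.2, x.2⟩)
    ?_ ?_ ?_ ?_ ?_
  · rintro ⟨S, i⟩ hx
    rw [Finset.mem_sigma] at hx ⊢
    exact ⟨Finset.mem_univ _, Finset.mem_insert_self _ _⟩
  · rintro ⟨S, i⟩ hx
    rw [Finset.mem_sigma] at hx ⊢
    refine ⟨Finset.mem_univ _, Finset.mem_compl.mpr (Finset.notMem_erase _ _)⟩
  · rintro ⟨S, i⟩ hx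
    rw [Finset.mem_sigma] at hx
    have hi : i ∉ S := Finset.mem_compl.mp hx.2
    simp only [Sigma.mk.inj_iff]
    exact ⟨by rw [Finset.erase_insert hi], HEq.rfl⟩
  · rintro ⟨S, i⟩ hx
    rw [Finset.mem_sigma] at hx
    simp only [Sigma.mk.inj_iff]
    exact ⟨by rw [Finset.insert_erase hx.2], HEq.rfl⟩
  · rintro ⟨S, i⟩ _
    rfl

lemma BF_eps (x q : MixedForm m) : BF (eps m x) q = BF x (coD m q) := by
  rw [BF, BF]
  have e1 : ∀ S, fisch ((eps m x) S) (q S)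
      = ∑ i ∈ S, fsgn i S * fisch (x (S.erase i)) (pderiv i (q S)) := by
    intro S
    rw [eps, rop_apply, fisch_sum_left]
    refine Finset.sum_congr rfl fun i _ => ?_
    rw [fisch_smul_left, mX_apply, fisch_adj]
  have e2 : ∀ S, fisch (x S) ((coD m q) S)
      = ∑ i ∈ Sᶜ, fsgn i S * fisch (x S) (pderiv i (q (insert i S))) := by
    intro S
    rw [coD_eq, lop_apply, fisch_sum_right]
    refine Finset.sum_congr rfl fun i _ => ?_
    rw [fisch_smul_right, pd_apply]
  rw [Finset.sum_congr rfl fun S _ => e1 S, Finset.sum_congr rfl fun S _ => e2 S]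
  rw [← sum_insert_reindex (fun S i => fsgn i S * fisch (x (S.erase i)) (pderiv i (q S)))]
  refine Finset.sum_congr rfl fun S _ => Finset.sum_congr rfl fun i hi => ?_
  have hiS : i ∉ S := Finset.mem_compl.mp hi
  rw [fsgn_insert_self, Finset.erase_insert hiS]

lemma BF_iot (w q : MixedForm m) : BF (iot m w) q = BF w (extD m q) := by
  rw [BF, BF]
  have e1 : ∀ S, fisch ((iot m w) S) (q S)
      = ∑ i ∈ Sᶜ, fsgn i S * fisch (w (insert i S)) (pderiv i (q S)) := by
    intro S
    rw [iot, lop_apply, fisch_sum_left]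
    refine Finset.sum_congr rfl fun i _ => ?_
    rw [fisch_smul_left, mX_apply, fisch_adj]
  have e2 : ∀ S, fisch (w S) ((extD m q) S)
      = ∑ i ∈ S, fsgn i S * fisch (w S) (pderiv i (q (S.erase i))) := by
    intro S
    rw [extD_eq, rop_apply, fisch_sum_right]
    refine Finset.sum_congr rfl fun i _ => ?_
    rw [fisch_smul_right, pd_apply]
  rw [Finset.sum_congr rfl fun S _ => e1 S, Finset.sum_congr rfl fun S _ => e2 S]
  rw [← sum_insert_reindex (fun S i => fsgn i S * fisch (w S) (pderiv i (q (S.erase i))))]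
  refine Finset.sum_congr rfl fun S _ => Finset.sum_congr rfl fun i hi => ?_
  have hiS : i ∉ S := Finset.mem_compl.mp hi
  rw [fsgn_insert_self, Finset.erase_insert hiS]

end RPD
namespace RPD

open MvPolynomial

variable {m : ℕ}

lemma rr_ne_zero (hm : 0 < m) : rr m ≠ 0 := by
  intro h
  have h2 := congrArg (eval (fun _ : Fin m => (1:ℝ))) h
  rw [rr, map_sum, map_zero] at h2
  simp only [map_mul, eval_X, mul_one, Finset.sum_const, Finset.card_univ,
    Fintype.card_fin, nsmul_eq_mul] at h2
  have : (m : ℝ) ≠ 0 := Nat.cast_ne_zero.mpr (Nat.pos_iff_ne_zero.mp hm)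
  exact this (by linarith)

lemma nsmul_eq_two_smul {M : Type*} [AddCommGroup M] [Module ℝ M] {n : ℕ} {v : M}
    (h : n • v = (2:ℝ) • v) (hn : n ≠ 2) : v = 0 := by
  have h1 : ((n : ℝ) - 2) • v = 0 := by
    rw [sub_smul, Nat.cast_smul_eq_nsmul, h, sub_self]
  rcases smul_eq_zero.mp h1 with hc | hv
  · exfalso
    have : (n : ℝ) = 2 := by linarith [sub_eq_zero.mp hc]
    exact hn (by exact_mod_cast this)
  · exact hv

lemma key_inj {k s : ℕ} (hs : s < m) {x : MixedForm m}
    (hH : ∀ A, (x A).IsHomogeneous k) (hS : ∀ A : Finset (Fin m), A.card ≠ s → x A = 0)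
    (hcoD : coD m x = 0) {W : MixedForm m} (hW : eps m x = iot m W) : x = 0 := by
  have hm : 0 < m := lt_of_le_of_lt (Nat.zero_le s) hs
  have hiotx_supp : ∀ B : Finset (Fin m), B.card + 1 ≠ s → iot m x B = 0 :=
    supp_lop _ hS
  have h1 : iot m (eps m x) = 0 := by rw [hW, iot_iot]
  have h2 : ∀ B, eps m (iot m x) B = rr m * x B := by
    intro B
    have h3 := iot_eps x B
    rw [show iot m (eps m x) B = 0 from by rw [h1]; rfl, zero_add] at h3
    exact h3
  have hcoDiot : coD m (iot m x) = 0 := by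
    funext B
    have h4 := coD_iot_anti x B
    rw [hcoD, map_zero] at h4
    simpa using h4
  have hiH : ∀ A, ((iot m x) A).IsHomogeneous (k+1) := homog_iot hH
  have h5 : ∀ B : Finset (Fin m),
      coD m (eps m (iot m x)) B = ((m - B.card) + (k+1)) • iot m x B := by
    intro B
    have h6 := coD_eps_homog hiH B
    rw [hcoDiot, map_zero] at h6
    simpa using h6
  have h7 : ∀ B : Finset (Fin m), coD m (eps m (iot m x)) B = (2:ℝ) • iot m x B := by
    intro B
    have h8 : eps m (iot m x) = fun A => rr m * x A := funext h2
    rw [h8, coD_mulR]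
    rw [hcoD]
    simp
  have hiotzero : iot m x = 0 := by
    funext B
    by_cases hB : B.card + 1 = s
    · have h9 : ((m - B.card) + (k+1)) • iot m x B = (2:ℝ) • iot m x B := by
        rw [← h5 B, h7 B]
      have hne : (m - B.card) + (k+1) ≠ 2 := by omega
      exact nsmul_eq_two_smul h9 hne
    · exact hiotx_supp B hB
  funext B
  have h10 : rr m * x B = 0 := by
    rw [← h2 B, hiotzero, map_zero]
    rfl
  rcases mul_eq_zero.mp h10 with hrr | hx
  · exact absurd hrr (rr_ne_zero hm)
  · exact hx

end RPD
namespace RPD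

open MvPolynomial

variable {m : ℕ}

lemma mem_Homog {P : MixedForm m} {k : ℕ} :
    P ∈ Homog m k ↔ ∀ B, (P B).IsHomogeneous k := Iff.rfl

lemma mem_DegSupp_singleton {P : MixedForm m} {s : ℕ} :
    P ∈ DegSupp m {s} ↔ ∀ B : Finset (Fin m), B.card ≠ s → P B = 0 := Iff.rfl

lemma finDim_homog (m k : ℕ) : FiniteDimensional ℝ (Homog m k) := by
  let V := MvPolynomial.restrictTotalDegree (Fin m) ℝ k
  have hmem : ∀ (x : Homog m k) (B : Finset (Fin m)), (x : MixedForm m) B ∈ V := by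
    intro x B
    rw [MvPolynomial.mem_restrictTotalDegree]
    exact (x.2 B).totalDegree_le
  let φ : (Homog m k) →ₗ[ℝ] (Finset (Fin m) → V) :=
    { toFun := fun x B => ⟨(x : MixedForm m) B, hmem x B⟩
      map_add' := fun x y => funext fun B => Subtype.ext rfl
      map_smul' := fun c x => funext fun B => Subtype.ext rfl }
  have hinj : Function.Injective φ := by
    intro x y hxy
    apply Subtype.ext
    funext B
    exact congrArg Subtype.val (congrFun hxy B)
  exact FiniteDimensional.of_injective φ hinj

end RPD
namespace RPD

open MvPolynomial

variable {m : ℕ}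

lemma DegSupp_ne {P : MixedForm m} {s : ℕ} (h : P ∈ DegSupp m {s}) :
    ∀ B : Finset (Fin m), B.card ≠ s → P B = 0 :=
  fun B hB => h B (fun hm => hB hm)

lemma DegSupp_mk {P : MixedForm m} {s : ℕ} (h : ∀ B : Finset (Fin m), B.card ≠ s → P B = 0) :
    P ∈ DegSupp m {s} :=
  fun B hB => h B (fun hm => hB hm)

lemma main_surj {k s : ℕ} (hs : s < m) (P : MixedForm m)
    (hPH : ∀ B, (P B).IsHomogeneous k)
    (hPS : ∀ B : Finset (Fin m), B.card ≠ s → P B = 0)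
    (hcoDP : coD m P = 0) :
    ∃ Q : MixedForm m, Q ∈ Homog m (k + 1) ⊓ DegSupp m {s + 1} ∧
      extD m Q = 0 ∧ coD m Q = P := by
  classical
  have hκ : ((k + s + 2 : ℕ) : ℝ) ≠ 0 := Nat.cast_ne_zero.mpr (by omega)
  set κ : ℝ := ((k + s + 2 : ℕ) : ℝ) with hκdef
  set K : Submodule ℝ (MixedForm m) := Homog m k ⊓ DegSupp m {s} ⊓ LinearMap.ker (coD m)
    with hKdef
  haveI : FiniteDimensional ℝ (Homog m k) := finDim_homog m k
  haveI hKfd : FiniteDimensional ℝ K :=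
    Submodule.finiteDimensional_of_le (le_trans inf_le_left inf_le_left)
  have hΦdef : ∃ Φ : MixedForm m →ₗ[ℝ] MixedForm m,
      ∀ x : MixedForm m, Φ x = κ⁻¹ • coD m (extD m (iot m (eps m x))) :=
    ⟨κ⁻¹ • ((coD m) ∘ₗ (extD m) ∘ₗ (iot m) ∘ₗ (eps m)), fun x => rfl⟩
  obtain ⟨Φ, hΦ_apply⟩ := hΦdef
  have chain : ∀ x : MixedForm m, (∀ B, (x B).IsHomogeneous k) →
      (∀ B : Finset (Fin m), B.card ≠ s → x B = 0) →
      (∀ B, ((extD m (iot m (eps m x))) B).IsHomogeneous (k+1)) ∧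
      (∀ B : Finset (Fin m), B.card ≠ s + 1 → (extD m (iot m (eps m x))) B = 0) := by
    intro x hxH hxS
    have h1 : ∀ B, ((eps m x) B).IsHomogeneous (k+1) := homog_eps hxH
    have h2 : ∀ B : Finset (Fin m), B.card ≠ s + 1 → (eps m x) B = 0 :=
      supp_rop _ hxS
    have h3 : ∀ B, ((iot m (eps m x)) B).IsHomogeneous (k+2) := homog_iot h1
    have h4 : ∀ B : Finset (Fin m), B.card ≠ s → (iot m (eps m x)) B = 0 := by
      intro B hB
      exact supp_lop _ h2 B (by omega)
    exact ⟨homog_extD h3, supp_rop _ h4⟩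
  have hΦK : ∀ x ∈ K, Φ x ∈ K := by
    intro x hx
    obtain ⟨hx1, _⟩ := Submodule.mem_inf.mp hx
    obtain ⟨hxH, hxS⟩ := Submodule.mem_inf.mp hx1
    obtain ⟨hch1, hch2⟩ := chain x hxH (DegSupp_ne hxS)
    refine Submodule.mem_inf.mpr ⟨Submodule.mem_inf.mpr ⟨?_, ?_⟩, ?_⟩
    · intro B
      have he : (Φ x) B = κ⁻¹ • (coD m (extD m (iot m (eps m x)))) B := by
        rw [hΦ_apply]; rfl
      rw [he]
      exact isHom_smul _ (homog_coD hch1 B)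
    · refine DegSupp_mk fun B hB => ?_
      have he : (Φ x) B = κ⁻¹ • (coD m (extD m (iot m (eps m x)))) B := by
        rw [hΦ_apply]; rfl
      have h0 : (coD m (extD m (iot m (eps m x)))) B = 0 := supp_lop _ hch2 B (by omega)
      rw [he, h0, smul_zero]
    · rw [LinearMap.mem_ker, hΦ_apply, map_smul, coD_coD, smul_zero]
  have hT : ∃ T : K →ₗ[ℝ] K, ∀ y : K, (T y : MixedForm m) = Φ y.1 :=
    ⟨Φ.restrict hΦK, fun y => congrArg Subtype.val (LinearMap.restrict_apply hΦK y)⟩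
  obtain ⟨T, hT_apply⟩ := hT
  have hTinj : Function.Injective T := by
    rw [← LinearMap.ker_eq_bot, LinearMap.ker_eq_bot']
    intro x hx0
    obtain ⟨hx1, hxker⟩ := Submodule.mem_inf.mp x.2
    obtain ⟨hxH, hxS'⟩ := Submodule.mem_inf.mp hx1
    have hxS : ∀ B : Finset (Fin m), B.card ≠ s → x.1 B = 0 := DegSupp_ne hxS'
    have hxker' : coD m x.1 = 0 := LinearMap.mem_ker.mp hxker
    have hΦx0 : Φ x.1 = 0 := by
      rw [← hT_apply x, hx0]
      rfl
    set v : MixedForm m := eps m x.1 with hvdef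
    have hvH : ∀ B, (v B).IsHomogeneous (k+1) := homog_eps hxH
    have hvS : ∀ B : Finset (Fin m), B.card ≠ s + 1 → v B = 0 := supp_rop _ hxS
    set dv : MixedForm m := extD m v with hdvdef
    set Af : MixedForm m := κ⁻¹ • extD m (iot m v) with hAfdef
    have hsmul : ∀ B, iot m dv B + extD m (iot m v) B = κ • v B := by
      intro B
      rw [iot_extD_homog hvH B, ← Nat.cast_smul_eq_nsmul ℝ]
      by_cases hB : B.card = s + 1
      · congr 1
        rw [hB, hκdef]
        push_cast
        ring
      · rw [hvS B hB, smul_zero, smul_zero]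
    have hvA : v = κ⁻¹ • iot m dv + Af := by
      funext B
      have h5 : (κ⁻¹ • iot m dv + Af) B
          = κ⁻¹ • (iot m dv B + extD m (iot m v) B) := by
        show κ⁻¹ • iot m dv B + κ⁻¹ • extD m (iot m v) B = _
        rw [smul_add]
      rw [h5, hsmul B, smul_smul, inv_mul_cancel₀ hκ, one_smul]
    have hcoDAf : coD m Af = Φ x.1 := by
      rw [hAfdef, map_smul, hΦ_apply]
    have hBF0 : BF v Af = 0 := by
      have hb : BF v Af = BF x.1 (coD m Af) := BF_eps x.1 Af
      rw [hcoDAf, hΦx0, BF_zero_right] at hb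
      exact hb
    have hAf0 : Af = 0 := by
      apply BF_self_eq_zero
      have e2 : BF (iot m dv) Af = 0 := by
        rw [BF_iot]
        have h6 : extD m Af = 0 := by rw [hAfdef, map_smul, extD_extD, smul_zero]
        rw [h6, BF_zero_right]
      have e1 : BF v Af = κ⁻¹ * BF (iot m dv) Af + BF Af Af := by
        conv_lhs => rw [hvA]
        rw [BF_add_left, BF_smul_left]
      rw [e1, e2, mul_zero, zero_add] at hBF0
      exact hBF0
    have hW : eps m x.1 = iot m (κ⁻¹ • dv) := by
      rw [map_smul, ← hvdef, hvA, hAf0, add_zero]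
    have hx1zero : x.1 = 0 := key_inj hs hxH hxS hxker' hW
    exact Subtype.ext hx1zero
  have hTsurj : Function.Surjective T := LinearMap.injective_iff_surjective.mp hTinj
  have hPK : P ∈ K :=
    Submodule.mem_inf.mpr ⟨Submodule.mem_inf.mpr ⟨hPH, DegSupp_mk hPS⟩,
      LinearMap.mem_ker.mpr hcoDP⟩
  obtain ⟨y, hy⟩ := hTsurj ⟨P, hPK⟩
  obtain ⟨hy1, _⟩ := Submodule.mem_inf.mp y.2
  obtain ⟨hyH, hyS⟩ := Submodule.mem_inf.mp hy1
  obtain ⟨hch1, hch2⟩ := chain y.1 hyH (DegSupp_ne hyS)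
  refine ⟨κ⁻¹ • extD m (iot m (eps m y.1)),
    Submodule.mem_inf.mpr ⟨?_, ?_⟩, ?_, ?_⟩
  · intro B
    show (κ⁻¹ • (extD m (iot m (eps m y.1))) B).IsHomogeneous (k+1)
    exact isHom_smul _ (hch1 B)
  · refine DegSupp_mk fun B hB => ?_
    show κ⁻¹ • (extD m (iot m (eps m y.1))) B = 0
    rw [hch2 B hB, smul_zero]
  · rw [map_smul, extD_extD, smul_zero]
  · have h7 : (T y : MixedForm m) = P := congrArg Subtype.val hy
    rw [hT_apply y, hΦ_apply] at h7
    rw [map_smul]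
    exact h7
end RPD

theorem refined_poincare_dstar (m k s : ℕ) (hs : s < m) (P : MixedForm m)
    (hP : P ∈ Homog m k ⊓ DegSupp m {s}) :
    coD m P = 0 ↔ ∃ Q : MixedForm m,
      Q ∈ Homog m (k + 1) ⊓ DegSupp m {s + 1} ∧ extD m Q = 0 ∧ coD m Q = P := by
  constructor
  · intro hcoDP
    obtain ⟨hPH, hPS⟩ := Submodule.mem_inf.mp hP
    exact RPD.main_surj hs P hPH (RPD.DegSupp_ne hPS) hcoDP
  · rintro ⟨Q, hQ, hdQ, hcoDQ⟩
    rw [← hcoDQ]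
    exact RPD.coD_coD Q
end

section
/- For all integers k ≥ 0, m ≥ 2 and 1 ≤ s ≤ m-1, the quantity d(k,m,s) = binom(m-2, s-1) · binom(k+m-2, m-2) · (2k+m)(k+m-1) / ((k+s)(k+m-s)) is a positive integer, and it satisfies the duality d(k,m,s) = d(k,m,m-s). -/
open MvPolynomial

open Nat

private lemma choose_cast_q {n r : ℕ} (h : r ≤ n) : ((n.choose r : ℚ)) = n ! / (r ! * (n - r)!) :=
  Nat.cast_choose ℚ h


set_option maxHeartbeats 1000000 in
theorem d_pos_int_and_symm (m k s : ℕ) (hm : 2 ≤ m) (hs1 : 1 ≤ s) (hs2 : s ≤ m - 1) :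
    (∃ n : ℕ, 0 < n ∧
      ((m - 2).choose (s - 1) : ℚ) * ((k + m - 2).choose (m - 2) : ℚ) *
          ((2 * (k : ℚ) + m) * ((k : ℚ) + m - 1)) /
          (((k : ℚ) + s) * ((k : ℚ) + m - s)) = n) ∧
    ((m - 2).choose (s - 1) : ℚ) * ((k + m - 2).choose (m - 2) : ℚ) *
        ((2 * (k : ℚ) + m) * ((k : ℚ) + m - 1)) /
        (((k : ℚ) + s) * ((k : ℚ) + m - s)) =
      ((m - 2).choose (m - s - 1) : ℚ) * ((k + m - 2).choose (m - 2) : ℚ) *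
        ((2 * (k : ℚ) + m) * ((k : ℚ) + m - 1)) /
        (((k : ℚ) + ((m - s : ℕ) : ℚ)) * ((k : ℚ) + m - ((m - s : ℕ) : ℚ))) := by
  obtain ⟨a, rfl⟩ : ∃ a, s = a + 1 := ⟨s - 1, by omega⟩
  obtain ⟨b, rfl⟩ : ∃ b, m = a + b + 2 := ⟨m - a - 2, by omega⟩
  have e1 : a + b + 2 - 2 = a + b := by omega
  have e2 : a + 1 - 1 = a := by omega
  have e3 : k + (a + b + 2) - 2 = k + a + b := by omega
  have e4 : a + b + 2 - (a + 1) = b + 1 := by omega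
  have e5 : b + 1 - 1 = b := by omega
  rw [e1, e2, e3, e4, e5]
  have fk : ((k ! : ℚ)) ≠ 0 := by positivity
  have fa : ((a ! : ℚ)) ≠ 0 := by positivity
  have fb : ((b ! : ℚ)) ≠ 0 := by positivity
  have fab : (((a + b)! : ℚ)) ≠ 0 := by positivity
  have fkab : (((k + a + b)! : ℚ)) ≠ 0 := by positivity
  have fka : (((k + a)! : ℚ)) ≠ 0 := by positivity
  have fkb : (((k + b)! : ℚ)) ≠ 0 := by positivity
  have d1 : ((k : ℚ) + a + 1) ≠ 0 := by positivity
  have d2 : ((k : ℚ) + b + 1) ≠ 0 := by positivity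
  have c1 : ((a + b).choose a : ℚ) = (a + b)! / (a ! * b !) := by
    rw [choose_cast_q (by omega), Nat.add_sub_cancel_left]
  have c2 : ((k + a + b).choose (a + b) : ℚ) = (k + a + b)! / ((a + b)! * k !) := by
    rw [choose_cast_q (by omega), show k + a + b - (a + b) = k by omega]
  have c3 : (((k + a + b + 1).choose (k + a + 1) : ℚ)) =
      (((k : ℚ) + a + b + 1) * (k + a + b)!) / ((((k : ℚ) + a + 1) * (k + a)!) * b !) := by
    rw [choose_cast_q (by omega), show k + a + b + 1 - (k + a + 1) = b by omega,
      Nat.factorial_succ (k + a + b), Nat.factorial_succ (k + a)]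
    push_cast
    ring
  have c4 : (((k + a + b + 1).choose (k + b + 1) : ℚ)) =
      (((k : ℚ) + a + b + 1) * (k + a + b)!) / ((((k : ℚ) + b + 1) * (k + b)!) * a !) := by
    rw [choose_cast_q (by omega), show k + a + b + 1 - (k + b + 1) = a by omega,
      Nat.factorial_succ (k + a + b), Nat.factorial_succ (k + b)]
    push_cast
    ring
  have c5 : (((k + a).choose k : ℚ)) = (k + a)! / (k ! * a !) := by
    rw [choose_cast_q (by omega), Nat.add_sub_cancel_left]
  have c6 : (((k + b).choose k : ℚ)) = (k + b)! / (k ! * b !) := by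
    rw [choose_cast_q (by omega), Nat.add_sub_cancel_left]
  have hA : ((a + b).choose a : ℚ) * ((k + a + b).choose (a + b)) * ((k : ℚ) + a + b + 1) =
      ((k : ℚ) + a + 1) * (((k + a + b + 1).choose (k + a + 1) : ℚ) * ((k + a).choose k)) := by
    rw [c1, c2, c3, c5]
    field_simp
  have hB : ((a + b).choose a : ℚ) * ((k + a + b).choose (a + b)) * ((k : ℚ) + a + b + 1) =
      ((k : ℚ) + b + 1) * (((k + a + b + 1).choose (k + b + 1) : ℚ) * ((k + b).choose k)) := by
    rw [c1, c2, c4, c6]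
    field_simp
  have hsymm := Nat.choose_symm (show a ≤ a + b by omega)
  rw [Nat.add_sub_cancel_left] at hsymm
  have dd : ((k : ℚ) + ((a : ℚ) + 1)) * ((k : ℚ) + ((a : ℚ) + (b : ℚ) + 2) - ((a : ℚ) + 1)) ≠ 0 := by
    have h : ((k : ℚ) + ((a : ℚ) + 1)) * ((k : ℚ) + ((a : ℚ) + (b : ℚ) + 2) - ((a : ℚ) + 1)) =
        ((k : ℚ) + a + 1) * ((k : ℚ) + b + 1) := by ring
    rw [h]
    exact mul_ne_zero d1 d2
  refine ⟨⟨(k + a + b + 1).choose (k + a + 1) * (k + a).choose k +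
      (k + a + b + 1).choose (k + b + 1) * (k + b).choose k, ?_, ?_⟩, ?_⟩
  · have h1 := Nat.choose_pos (show k + a + 1 ≤ k + a + b + 1 by omega)
    have h2 := Nat.choose_pos (show k ≤ k + a by omega)
    positivity
  · push_cast
    rw [div_eq_iff dd]
    linear_combination ((k : ℚ) + b + 1) * hA + ((k : ℚ) + a + 1) * hB
  · rw [← hsymm]
    push_cast
    ring
end

section
/- Let m ≥ 2 and n = ⌊m/2⌋. Then the sum over all even s with 0 ≤ s ≤ m of dim H_k^s plus the sum over all odd s with 1 ≤ s ≤ m of dim H_{k-1}^s equals 2^{m-1} · binom(k+m-2, m-2), i.e. Σ_{j=0}^{n} d(k,m,2j) + Σ_{j=0}^{n-1} d(k-1,m,2j+1) = 2^{m-1} binom(k+m-2, m-2), where d(k,m,s) = binom(m-2,s-1)·binom(k+m-2,m-2)·(2k+m)(k+m-1)/((k+s)(k+m-s)) for 1 ≤ s ≤ m-1, with the conventions d(0,m,0) = d(0,m,m) = 1, d(k,m,0) = d(k,m,m) = 0 for k ≥ 1, and d(-1,m,s) = 0. -/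
open MvPolynomial

section
open Nat

private lemma factQ_ne (n : ℕ) : ((n ! : ℚ)) ≠ 0 := by
  exact_mod_cast n.factorial_ne_zero

private lemma auxI1 (k a b : ℕ) :
    (((a+b).choose a : ℚ)) * ((k+a+b).choose (a+b)) * (k+a+b+1) =
      ((k+a).choose a) * ((k+a+b+1).choose b) * (k+a+1) := by
  rw [Nat.cast_choose ℚ (show a ≤ a+b by omega),
      Nat.cast_choose ℚ (show a+b ≤ k+a+b by omega),
      Nat.cast_choose ℚ (show a ≤ k+a by omega),
      Nat.cast_choose ℚ (show b ≤ k+a+b+1 by omega)]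
  rw [show a+b-a = b by omega, show k+a+b-(a+b) = k by omega,
      show k+a-a = k by omega, show k+a+b+1-b = k+a+1 by omega]
  rw [show (k+a+b+1)! = (k+a+b+1) * (k+a+b)! from Nat.factorial_succ _,
      show (k+a+1)! = (k+a+1) * (k+a)! from Nat.factorial_succ _]
  have h1 := factQ_ne a; have h2 := factQ_ne b; have h3 := factQ_ne k
  have h4 := factQ_ne (a+b); have h5 := factQ_ne (k+a)
  have h6 : ((k:ℚ)+a+1) ≠ 0 := by positivity
  push_cast
  field_simp

private lemma auxI2 (k a b : ℕ) :
    (((a+b).choose a : ℚ)) * ((k+a+b).choose (a+b)) * (k+a+b+1) =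
      ((k+b).choose b) * ((k+a+b+1).choose a) * (k+b+1) := by
  rw [Nat.cast_choose ℚ (show a ≤ a+b by omega),
      Nat.cast_choose ℚ (show a+b ≤ k+a+b by omega),
      Nat.cast_choose ℚ (show b ≤ k+b by omega),
      Nat.cast_choose ℚ (show a ≤ k+a+b+1 by omega)]
  rw [show a+b-a = b by omega, show k+a+b-(a+b) = k by omega,
      show k+b-b = k by omega, show k+a+b+1-a = k+b+1 by omega]
  rw [show (k+a+b+1)! = (k+a+b+1) * (k+a+b)! from Nat.factorial_succ _,
      show (k+b+1)! = (k+b+1) * (k+b)! from Nat.factorial_succ _]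
  have h1 := factQ_ne a; have h2 := factQ_ne b; have h3 := factQ_ne k
  have h4 := factQ_ne (a+b); have h5 := factQ_ne (k+b)
  have h6 : ((k:ℚ)+b+1) ≠ 0 := by positivity
  push_cast
  field_simp

private lemma auxTrin (k t u : ℕ) :
    (((k+t).choose t : ℚ)) * ((k+t+u).choose u) =
      ((k+t+u).choose (t+u)) * ((t+u).choose t) := by
  rw [Nat.cast_choose ℚ (show t ≤ k+t by omega),
      Nat.cast_choose ℚ (show u ≤ k+t+u by omega),
      Nat.cast_choose ℚ (show t+u ≤ k+t+u by omega),
      Nat.cast_choose ℚ (show t ≤ t+u by omega)]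
  rw [show k+t-t = k by omega, show k+t+u-u = k+t by omega,
      show k+t+u-(t+u) = k by omega, show t+u-t = u by omega]
  have h1 := factQ_ne t; have h2 := factQ_ne u; have h3 := factQ_ne k
  have h4 := factQ_ne (k+t); have h5 := factQ_ne (t+u)
  field_simp

/-- the correction term `G`. -/
private noncomputable def Gq (k N u : ℕ) : ℚ :=
  if 1 ≤ u ∧ u ≤ N then ((k+u-1).choose (u-1) * (k+N).choose (N-u) : ℚ) else 0

private lemma Gq_zero (k N u : ℕ) (h : ¬ (1 ≤ u ∧ u ≤ N)) : Gq k N u = 0 := by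
  rw [Gq, if_neg h]

private lemma auxL1 (k t N : ℕ) (ht : t ≤ N) :
    ((k+t).choose t : ℚ) * ((k+N+1).choose (N-t)) =
      ((k+N).choose N : ℚ) * (N.choose t) + Gq k N (t+1) := by
  rcases eq_or_lt_of_le ht with rfl | htN
  · rw [Gq_zero _ _ _ (by omega)]
    simp
  · obtain ⟨r, hr⟩ : ∃ r, N - t = r + 1 := ⟨N-t-1, by omega⟩
    rw [hr]
    have pas : (k+N+1).choose (r+1) = (k+N).choose r + (k+N).choose (r+1) :=
      Nat.choose_succ_succ _ _
    have tri := auxTrin k t (N-t)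
    rw [show k+t+(N-t) = k+N by omega, show t+(N-t) = N by omega, hr] at tri
    have hG : Gq k N (t+1) = ((k+t).choose t : ℚ) * ((k+N).choose r) := by
      rw [Gq, if_pos (by omega), show k+(t+1)-1 = k+t by omega,
        show t+1-1 = t by omega, show N-(t+1) = r by omega]
    rw [hG]
    have pasQ : (((k+N+1).choose (r+1) : ℕ) : ℚ) = ((k+N).choose r : ℚ) + ((k+N).choose (r+1) : ℚ) := by
      exact_mod_cast congrArg (fun x : ℕ => (x : ℚ)) pas
    linear_combination tri + ((k+t).choose t : ℚ) * pasQ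

private lemma auxL2 (k t N : ℕ) (ht : t ≤ N) :
    ((k+t).choose t : ℚ) * ((k+N+1).choose (N-t)) =
      ((k+N+1).choose N : ℚ) * (N.choose t) - Gq (k+1) N t := by
  rcases Nat.eq_zero_or_pos t with rfl | htpos
  · rw [Gq_zero _ _ _ (by omega)]
    simp
  · have pas : (k+t+1).choose t = (k+t).choose (t-1) + (k+t).choose t := by
      obtain ⟨r, rfl⟩ : ∃ r, t = r+1 := ⟨t-1, by omega⟩
      rw [show k+(r+1) = k+r+1 by omega]
      simpa using Nat.choose_succ_succ (k+r+1) r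
    have tri := auxTrin (k+1) t (N-t)
    rw [show k+1+t+(N-t) = k+N+1 by omega, show t+(N-t) = N by omega,
        show k+1+t = k+t+1 by omega] at tri
    have hG : Gq (k+1) N t = ((k+t).choose (t-1) : ℚ) * ((k+N+1).choose (N-t)) := by
      rw [Gq, if_pos (by omega), show k+1+t-1 = k+t by omega,
        show k+1+N = k+N+1 by omega]
    rw [hG]
    have pasQ : (((k+t+1).choose t : ℕ) : ℚ) = ((k+t).choose (t-1) : ℚ) + ((k+t).choose t : ℚ) := by
      exact_mod_cast congrArg (fun x : ℕ => (x : ℚ)) pas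
    linear_combination tri - ((k+N+1).choose (N-t) : ℚ) * pasQ

private lemma u_eq (m k s : ℕ) (h1 : 1 ≤ s) (h2 : s + 1 ≤ m) :
    dHR m (k : ℤ) (s : ℤ) =
      ((k+s-1).choose (s-1) : ℚ) * ((k+m-1).choose (m-1-s)) +
      ((k+m-s-1).choose (m-s-1) : ℚ) * ((k+m-1).choose (s-1)) := by
  obtain ⟨a, rfl⟩ : ∃ a, s = a + 1 := ⟨s-1, by omega⟩
  obtain ⟨b, rfl⟩ : ∃ b, m = a + b + 2 := ⟨m-a-2, by omega⟩
  rw [dHR, if_neg (by push_cast; omega), if_neg (by push_cast; omega)]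
  simp only [Int.toNat_natCast]
  rw [show a+b+2-2 = a+b by omega, show a+1-1 = a by omega,
      show k+(a+b+2)-2 = k+a+b by omega, show k+(a+1)-1 = k+a by omega,
      show k+(a+b+2)-1 = k+a+b+1 by omega, show a+b+2-1-(a+1) = b by omega,
      show a+b+2-(a+1)-1 = b by omega, show k+(a+b+2)-(a+1)-1 = k+b by omega]
  have hI1 := auxI1 k a b
  have hI2 := auxI2 k a b
  have hne : (((k:ℤ):ℚ) + ((a:ℚ)+1)) * (((k:ℤ):ℚ) + ((a:ℚ)+(b:ℚ)+2) - ((a:ℚ)+1)) ≠ 0 := by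
    push_cast
    have e1 : ((k:ℚ) + ((a:ℚ)+1)) = (k:ℚ)+(a:ℚ)+1 := by ring
    have e2 : ((k:ℚ) + ((a:ℚ)+(b:ℚ)+2) - ((a:ℚ)+1)) = (k:ℚ)+(b:ℚ)+1 := by ring
    rw [e1, e2]
    positivity
  push_cast
  rw [div_eq_iff (by push_cast at hne ⊢; convert hne using 2 <;> push_cast <;> ring)]
  push_cast at hI1 hI2
  linear_combination ((k:ℚ)+(b:ℚ)+1) * hI1 + ((k:ℚ)+(a:ℚ)+1) * hI2

private lemma dHR_s0 (m k : ℕ) (hk : 1 ≤ k) : dHR m (k:ℤ) 0 = 0 := by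
  rw [dHR, if_neg (by omega), if_pos (by omega), if_neg (by omega)]

private lemma dHR_sm (m k : ℕ) (hk : 1 ≤ k) : dHR m (k:ℤ) (m:ℤ) = 0 := by
  rw [dHR, if_neg (by omega), if_pos (Or.inr rfl), if_neg (by omega)]

private lemma dHR_k0 (m s : ℕ) (hm : 2 ≤ m) (hs : s ≤ m) :
    dHR m ((0:ℕ):ℤ) (s:ℤ) = (m.choose s : ℚ) := by
  rcases Nat.eq_zero_or_pos s with rfl | h1
  · rw [dHR, if_neg (by omega), if_pos (by omega), if_pos (by omega)]
    simp
  rcases eq_or_lt_of_le hs with rfl | h2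
  · rw [dHR, if_neg (by omega), if_pos (Or.inr rfl), if_pos (by omega)]
    simp [Nat.choose_self]
  · rw [u_eq m 0 s h1 (by omega)]
    rw [show (0:ℕ)+s-1 = s-1 by omega, show (0:ℕ)+m-1 = m-1 by omega,
        show (0:ℕ)+m-s-1 = m-s-1 by omega, Nat.choose_self, Nat.choose_self]
    rw [show m-1-s = (m-1)-s from rfl, Nat.choose_symm (show s ≤ m-1 by omega)]
    have pas : m.choose s = (m-1).choose (s-1) + (m-1).choose s := by
      rw [show m = (m-1)+1 by omega]
      rw [show ((m-1)+1).choose s = ((m-1)+1).choose ((s-1)+1) by congr 1; omega]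
      rw [Nat.choose_succ_succ]
      congr 2
      omega
    rw [pas]
    push_cast
    ring

private lemma sum_pair {M : Type*} [AddCommMonoid M] (f : ℕ → M) (n : ℕ) :
    ∑ j ∈ Finset.range n, (f (2*j) + f (2*j+1)) = ∑ t ∈ Finset.range (2*n), f t := by
  induction n with
  | zero => simp
  | succ n ih =>
    rw [Finset.sum_range_succ, ih, show 2*(n+1) = 2*n+1+1 by ring,
        Finset.sum_range_succ, Finset.sum_range_succ, add_assoc]

private lemma sum_ext {M : Type*} [AddCommMonoid M] (f : ℕ → M) {M0 M1 : ℕ} (h : M0 ≤ M1)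
    (h0 : ∀ t, M0 ≤ t → f t = 0) :
    ∑ t ∈ Finset.range M1, f t = ∑ t ∈ Finset.range M0, f t :=
  (Finset.sum_subset (Finset.range_subset_range.mpr h)
    (fun x _ hx => h0 x (by simpa using hx))).symm

private lemma sum_choose_big (N M : ℕ) (h : N + 1 ≤ M) :
    ∑ t ∈ Finset.range M, ((N.choose t : ℚ)) = 2^N := by
  rw [sum_ext _ h (fun t ht => by rw [Nat.choose_eq_zero_of_lt (by omega)]; simp)]
  exact_mod_cast congrArg (fun x : ℕ => (x:ℚ)) (Nat.sum_range_choose N)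

private lemma sum_choose_even (m : ℕ) (hm : 1 ≤ m) :
    ∑ j ∈ Finset.range (m/2 + 1), ((m.choose (2*j)) : ℚ) = 2^(m-1) := by
  set n := m/2 with hn
  have h1 : ∑ j ∈ Finset.range (n+1), (((m.choose (2*j)) : ℚ) + (m.choose (2*j+1) : ℚ)) = 2^m := by
    rw [sum_pair (fun t => (m.choose t : ℚ)) (n+1)]
    exact sum_choose_big m (2*(n+1)) (by omega)
  have h2 : ∑ j ∈ Finset.range (n+1), (((m.choose (2*j)) : ℚ) - (m.choose (2*j+1) : ℚ)) = 0 := by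
    have hsp := sum_pair (fun t => ((-1:ℚ)^t * (m.choose t))) (n+1)
    have e : ∀ j ∈ Finset.range (n+1),
        ((-1:ℚ)^(2*j) * (m.choose (2*j)) + (-1:ℚ)^(2*j+1) * (m.choose (2*j+1))) =
          ((m.choose (2*j) : ℚ) - (m.choose (2*j+1))) := by
      intro j _
      have hp : ((-1:ℚ))^(2*j) = 1 := by rw [pow_mul]; norm_num
      rw [pow_succ, hp]; ring
    rw [Finset.sum_congr rfl e] at hsp
    rw [hsp]
    rw [sum_ext _ (show m+1 ≤ 2*(n+1) by omega)
      (fun t ht => by rw [Nat.choose_eq_zero_of_lt (by omega)]; simp)]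
    have hz := Int.alternating_sum_range_choose_of_ne (show m ≠ 0 by omega)
    exact_mod_cast congrArg (fun x : ℤ => (x:ℚ)) hz
  rw [Finset.sum_add_distrib] at h1
  rw [Finset.sum_sub_distrib] at h2
  have hp : (2:ℚ)^m = 2*2^(m-1) := by
    conv_lhs => rw [show m = (m-1)+1 by omega]
    rw [pow_succ]
    ring
  rw [hp] at h1
  linarith

private lemma evenT (m k j : ℕ) (hm : 2 ≤ m) (hk : 1 ≤ k) (hj : j < m/2) :
    dHR m (k:ℤ) ((2*j+2 : ℕ) : ℤ) =
      2 * (((k+m-2).choose (m-2) : ℚ) * ((m-2).choose (2*j+1))) +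
        Gq k (m-2) (2*j+2) + Gq k (m-2) (m-2-2*j) := by
  by_cases hs : 2*j+2 ≤ m-1
  · rw [u_eq m k (2*j+2) (by omega) (by omega)]
    have e1 := auxL1 k (2*j+1) (m-2) (by omega)
    have e2 := auxL1 k (m-2-(2*j+1)) (m-2) (by omega)
    rw [show m-2-(m-2-(2*j+1)) = 2*j+1 by omega,
        show m-2-(2*j+1)+1 = m-2-2*j by omega,
        Nat.choose_symm (show 2*j+1 ≤ m-2 by omega)] at e2
    rw [show k+(m-2)+1 = k+m-2+1 by omega, show k+(m-2) = k+m-2 by omega] at e1 e2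
    rw [show 2*j+1+1 = 2*j+2 by omega] at e1
    rw [show k+(2*j+2)-1 = k+(2*j+1) by omega, show 2*j+2-1 = 2*j+1 by omega,
        show k+m-1 = k+m-2+1 by omega,
        show m-1-(2*j+2) = m-2-(2*j+1) by omega,
        show k+m-(2*j+2)-1 = k+(m-2-(2*j+1)) by omega,
        show m-(2*j+2)-1 = m-2-(2*j+1) by omega]
    rw [e1, e2]
    ring
  · have hm2 : 2*j+2 = m := by omega
    rw [hm2, dHR_sm m k hk]
    rw [Nat.choose_eq_zero_of_lt (show m-2 < 2*j+1 by omega)]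
    rw [Gq_zero _ _ _ (by omega), Gq_zero _ _ _ (by omega)]
    norm_num

private lemma oddT (m k j : ℕ) (hm : 2 ≤ m) (hj : j < m/2) :
    dHR m (k:ℤ) ((2*j+1 : ℕ) : ℤ) =
      2 * (((k+1+m-2).choose (m-2) : ℚ) * ((m-2).choose (2*j))) -
        Gq (k+1) (m-2) (2*j) - Gq (k+1) (m-2) (m-2-2*j) := by
  rw [u_eq m k (2*j+1) (by omega) (by omega)]
  have e1 := auxL2 k (2*j) (m-2) (by omega)
  have e2 := auxL2 k (m-2-2*j) (m-2) (by omega)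
  rw [show m-2-(m-2-2*j) = 2*j by omega,
      Nat.choose_symm (show 2*j ≤ m-2 by omega)] at e2
  rw [show k+(m-2)+1 = k+1+m-2 by omega] at e1 e2
  rw [show k+(2*j+1)-1 = k+2*j by omega, show 2*j+1-1 = 2*j by omega,
      show k+m-1 = k+1+m-2 by omega,
      show m-1-(2*j+1) = m-2-2*j by omega,
      show k+m-(2*j+1)-1 = k+(m-2-2*j) by omega,
      show m-(2*j+1)-1 = m-2-2*j by omega]
  rw [e1, e2]
  ring

end

theorem dim_identity_monogenic (m k : ℕ) (hm : 2 ≤ m) :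
    (∑ j ∈ Finset.range (m / 2 + 1), dHR m (k : ℤ) (2 * (j : ℤ))) +
      (∑ j ∈ Finset.range (m / 2), dHR m ((k : ℤ) - 1) (2 * (j : ℤ) + 1)) =
    2 ^ (m - 1) * ((k + m - 2).choose (m - 2) : ℚ) := by
  rcases Nat.eq_zero_or_pos k with rfl | hk
  · have hodd : ∀ j ∈ Finset.range (m/2), dHR m (((0:ℕ):ℤ) - 1) (2*(j:ℤ)+1) = 0 := by
      intro j _
      rw [dHR, if_pos (by omega)]
    rw [Finset.sum_congr rfl hodd, Finset.sum_const_zero, add_zero]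
    have heven : ∀ j ∈ Finset.range (m/2+1), dHR m ((0:ℕ):ℤ) (2*(j:ℤ)) = ((m.choose (2*j)) : ℚ) := by
      intro j hj
      have h := dHR_k0 m (2*j) hm (by have := Finset.mem_range.mp hj; omega)
      rw [show (((2*j:ℕ)):ℤ) = 2*(j:ℤ) by push_cast; ring] at h
      exact h
    rw [Finset.sum_congr rfl heven, sum_choose_even m (by omega)]
    rw [show (0:ℕ)+m-2 = m-2 by omega, Nat.choose_self]
    norm_num
  · have E : ∑ j ∈ Finset.range (m/2+1), dHR m (k:ℤ) (2*(j:ℤ)) =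
        ∑ j ∈ Finset.range (m/2),
          (2 * (((k+m-2).choose (m-2) : ℚ) * ((m-2).choose (2*j+1))) +
            Gq k (m-2) (2*(j+1)) + Gq k (m-2) (m-2-2*j)) := by
      rw [Finset.sum_range_succ']
      have h0 : dHR m (k:ℤ) (2*((0:ℕ):ℤ)) = 0 := by
        rw [show (2*((0:ℕ):ℤ)) = 0 by norm_num]
        exact dHR_s0 m k hk
      rw [h0, add_zero]
      refine Finset.sum_congr rfl fun j hj => ?_
      have hj' := Finset.mem_range.mp hj
      have h := evenT m k j hm hk hj'
      rw [show (((2*j+2:ℕ)):ℤ) = 2*(((j+1:ℕ)):ℤ) by push_cast; ring] at h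
      rw [show (2:ℕ)*(j+1) = 2*j+2 by ring]
      exact h
    have O : ∑ j ∈ Finset.range (m/2), dHR m ((k:ℤ)-1) (2*(j:ℤ)+1) =
        ∑ j ∈ Finset.range (m/2),
          (2 * (((k+m-2).choose (m-2) : ℚ) * ((m-2).choose (2*j))) -
            Gq k (m-2) (2*j) - Gq k (m-2) (m-2-2*j)) := by
      refine Finset.sum_congr rfl fun j hj => ?_
      have hj' := Finset.mem_range.mp hj
      have h := oddT m (k-1) j hm hj'
      rw [show k-1+1 = k by omega] at h
      rw [show (((2*j+1:ℕ)):ℤ) = 2*(j:ℤ)+1 by push_cast; ring] at h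
      rw [show ((k:ℤ)-1) = (((k-1:ℕ)):ℤ) by omega]
      exact h
    rw [E, O, ← Finset.sum_add_distrib]
    have hc : ∀ j ∈ Finset.range (m/2),
        ((2 * (((k+m-2).choose (m-2) : ℚ) * ((m-2).choose (2*j+1))) +
            Gq k (m-2) (2*(j+1)) + Gq k (m-2) (m-2-2*j)) +
        (2 * (((k+m-2).choose (m-2) : ℚ) * ((m-2).choose (2*j))) -
            Gq k (m-2) (2*j) - Gq k (m-2) (m-2-2*j))) =
        (2 * ((k+m-2).choose (m-2) : ℚ)) *
            (((m-2).choose (2*j) : ℚ) + ((m-2).choose (2*j+1) : ℚ)) +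
          (Gq k (m-2) (2*(j+1)) - Gq k (m-2) (2*j)) := fun j _ => by ring
    rw [Finset.sum_congr rfl hc, Finset.sum_add_distrib,
        Finset.sum_range_sub (fun j => Gq k (m-2) (2*j)),
        ← Finset.mul_sum, sum_pair (fun t => ((m-2).choose t : ℚ)) (m/2),
        sum_choose_big (m-2) (2*(m/2)) (by omega)]
    rw [Gq_zero _ _ _ (by omega), Gq_zero _ _ _ (by omega)]
    rw [show (2:ℚ)^(m-1) = 2*2^(m-2) by
      conv_lhs => rw [show m-1 = (m-2)+1 by omega]
      rw [pow_succ]; ring]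
    ring
end
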